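/- arXiv:math/0111014 — 9 statements merged into one kernel-verified Lean document; each statement's English description precedes it below -/
import Mathlib

section
/- Let B² = B + B = {b₁ + b₂ : b₁, b₂ ∈ B}. For a block w : B² → A define F(w) : B → A by F(w)(v) = f(b ↦ w(v + b)), and Σφ(F(w)) = ∑_{v ∈ B} φ(F(w)(v)). Assume φ⁻¹({0}) ≠ ∅ and that the local rule f is vacuum-preserving. Then φ is conserved by F if and only if for all blocks w, w' : B² → A that agree at every point of B² except possibly at 0, one has Σφ(F(w')) − Σφ(F(w)) = φ(w'(0)) − φ(w(0)). -/
open scoped Pointwise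

/-- The cellular automaton induced by a local rule `f` on neighbourhood `B`. -/
def induce {X A : Type*} [AddCommGroup X] (B : Finset X) (f : (B → A) → A)
    (a : X → A) : X → A :=
  fun x => f fun b => a (x + b.1)

/-- `ψ` is conserved by the CA induced by `f` on `B`. -/
def conserved {X A Z : Type*} [AddCommGroup X] [AddCommMonoid Z] (B : Finset X)
    (f : (B → A) → A) (ψ : A → Z) : Prop :=
  (∃ a : A, ψ a = 0) ∧
  (∀ a : X → A, (Function.support fun x => ψ (a x)).Finite →
      (Function.support fun x => ψ (induce B f a x)).Finite) ∧
  (∀ a : X → A, (Function.support fun x => ψ (a x)).Finite →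
      ∑ᶠ x, ψ (induce B f a x) = ∑ᶠ x, ψ (a x))

/-!
If `a` and `a'` differ only at `p`, then, `B` being symmetric, `F a` and `F a'` differ only on
`p + B`, where they are computed from the blocks of `a` and `a'` on `p + B + B`. So for finitely
supported configurations the change of `∑ᶠ φ ∘ F` is the change of a block sum, and the block
identity is the special case of conservation for blocks extended by a vacuum state. Conversely,
conservation follows by clearing the support one site at a time: each step changes both sides by
the same amount, and once `φ ∘ a = 0` both sides vanish because `f` preserves the vacuum.
-/

lemma finsum_sub_finsum_eq_sum_of_eq_off {X G : Type*} [AddCommGroup G] {g g' : X → G}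
    (hg : (Function.support g).Finite) (hg' : (Function.support g').Finite) (T : Finset X)
    (h : ∀ x ∉ T, g x = g' x) :
    ∑ᶠ x, g' x - ∑ᶠ x, g x = ∑ x ∈ T, (g' x - g x) := by
  rw [← finsum_sub_distrib hg' hg]
  refine finsum_eq_sum_of_support_subset _ fun x hx => ?_
  by_contra hxT
  exact hx (by simp only [h x hxT, sub_self])

lemma finsum_sub_finsum_of_eq_off {X A Z : Type*} [AddCommGroup Z] {φ : A → Z} {a a' : X → A}
    {p : X} (ha : (Function.support fun x => φ (a x)).Finite)
    (ha' : (Function.support fun x => φ (a' x)).Finite) (hp : ∀ y ≠ p, a y = a' y) :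
    ∑ᶠ x, φ (a' x) - ∑ᶠ x, φ (a x) = φ (a' p) - φ (a p) := by
  rw [finsum_sub_finsum_eq_sum_of_eq_off ha ha' {p}, Finset.sum_singleton]
  intro x hx
  rw [hp x (Finset.notMem_singleton.mp hx)]

section

variable {X A Z : Type*} [AddCommGroup X]

def IsVacuumPreserving [Zero Z] (B : Finset X) (f : (B → A) → A) (φ : A → Z) : Prop :=
  ∀ w : B → A, (∀ b, φ (w b) = 0) → φ (f w) = 0

variable [Zero Z] {B : Finset X} {f : (B → A) → A} {φ : A → Z}

lemma support_comp_induce_subset (hf : IsVacuumPreserving B f φ) (a : X → A) :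
    (Function.support fun x => φ (induce B f a x)) ⊆
      (Function.support fun x => φ (a x)) - (B : Set X) := by
  intro x hx
  obtain ⟨b, hb⟩ := not_forall.mp (mt (hf _) hx)
  exact ⟨x + b, hb, b, b.2, add_sub_cancel_right x b⟩

lemma finite_support_comp_induce (hf : IsVacuumPreserving B f φ) {a : X → A}
    (ha : (Function.support fun x => φ (a x)).Finite) :
    (Function.support fun x => φ (induce B f a x)).Finite :=
  (ha.sub B.finite_toSet).subset (support_comp_induce_subset hf a)

end

section

variable {X A Z : Type*} [AddCommGroup X] [AddCommGroup Z] {B : Finset X} {f : (B → A) → A}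
  {φ : A → Z} {a a' : X → A} {p : X}

lemma induce_apply_eq_of_eq_off (hBsym : ∀ b : X, b ∈ B ↔ -b ∈ B) (hp : ∀ y ≠ p, a y = a' y)
    {x : X} (hx : x - p ∉ B) : induce B f a x = induce B f a' x :=
  congrArg f <| funext fun b => hp _ fun hb => hx <| (hBsym _).mpr <| by
    rw [neg_sub, ← hb, add_sub_cancel_left]
    exact b.2

variable [DecidableEq X]

variable (B f φ) in
def blockSum (w : (B + B : Finset X) → A) : Z :=
  ∑ v : B, φ (f fun b => w ⟨v.1 + b.1, Finset.add_mem_add v.2 b.2⟩)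

variable (B) in
def blockAt (a : X → A) (p : X) : (B + B : Finset X) → A :=
  fun v => a (p + v)

lemma blockSum_blockAt :
    blockSum B f φ (blockAt B a p) = ∑ v ∈ B, φ (induce B f a (p + v)) := by
  rw [blockSum, ← Finset.sum_coe_sort B]
  simp only [blockAt, induce, add_assoc]

lemma finsum_induce_sub_eq_blockSum_sub (hBsym : ∀ b : X, b ∈ B ↔ -b ∈ B)
    (hf : IsVacuumPreserving B f φ) (ha : (Function.support fun x => φ (a x)).Finite)
    (ha' : (Function.support fun x => φ (a' x)).Finite) (hp : ∀ y ≠ p, a y = a' y) :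
    ∑ᶠ x, φ (induce B f a' x) - ∑ᶠ x, φ (induce B f a x) =
      blockSum B f φ (blockAt B a' p) - blockSum B f φ (blockAt B a p) := by
  rw [finsum_sub_finsum_eq_sum_of_eq_off (finite_support_comp_induce hf ha)
      (finite_support_comp_induce hf ha') (B.map (addLeftEmbedding p)), Finset.sum_map,
    Finset.sum_sub_distrib, blockSum_blockAt, blockSum_blockAt]
  · rfl
  · intro x hx
    refine congrArg φ (induce_apply_eq_of_eq_off hBsym hp fun hxp => hx ?_)
    exact Finset.mem_map.mpr ⟨x - p, hxp, add_sub_cancel p x⟩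

end

section

variable {X A Z : Type*} [AddCommGroup X] [DecidableEq X] [AddCommGroup Z] {B : Finset X}
  {f : (B → A) → A} {φ : A → Z} {v₀ : A}

lemma blockSum_sub_blockSum_of_finsum_eq (hBsym : ∀ b : X, b ∈ B ↔ -b ∈ B)
    (hf : IsVacuumPreserving B f φ) (hv₀ : φ v₀ = 0)
    (hcons : ∀ a : X → A, (Function.support fun x => φ (a x)).Finite →
      ∑ᶠ x, φ (induce B f a x) = ∑ᶠ x, φ (a x))
    (h0 : (0 : X) ∈ B + B) (w w' : (B + B : Finset X) → A)
    (hww' : ∀ v : (B + B : Finset X), (v : X) ≠ 0 → w v = w' v) :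
    blockSum B f φ w' - blockSum B f φ w = φ (w' ⟨0, h0⟩) - φ (w ⟨0, h0⟩) := by
  let extend (w : (B + B : Finset X) → A) (x : X) : A :=
    if hx : x ∈ B + B then w ⟨x, hx⟩ else v₀
  have hblock (w) : blockAt B (extend w) 0 = w := funext fun v => by simp [blockAt, extend]
  have hfin (w) : (Function.support fun x => φ (extend w x)).Finite :=
    (B + B).finite_toSet.subset fun x hx => by
      by_contra hxB
      exact hx (by simp only [extend, dif_neg (mt Finset.mem_coe.mpr hxB), hv₀])
  have hoff : ∀ y ≠ 0, extend w y = extend w' y := fun y hy => by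
    by_cases hyB : y ∈ B + B
    · simp only [extend, dif_pos hyB, hww' ⟨y, hyB⟩ hy]
    · simp only [extend, dif_neg hyB]
  calc blockSum B f φ w' - blockSum B f φ w
      = blockSum B f φ (blockAt B (extend w') 0) - blockSum B f φ (blockAt B (extend w) 0) := by
        rw [hblock, hblock]
    _ = ∑ᶠ x, φ (induce B f (extend w') x) - ∑ᶠ x, φ (induce B f (extend w) x) :=
        (finsum_induce_sub_eq_blockSum_sub hBsym hf (hfin w) (hfin w') hoff).symm
    _ = φ (extend w' 0) - φ (extend w 0) := by
        rw [hcons _ (hfin w), hcons _ (hfin w'),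
          finsum_sub_finsum_of_eq_off (hfin w) (hfin w') hoff]
    _ = φ (w' ⟨0, h0⟩) - φ (w ⟨0, h0⟩) := by simp only [extend, dif_pos h0]

lemma finsum_induce_eq_of_blockSum_sub_blockSum (hBsym : ∀ b : X, b ∈ B ↔ -b ∈ B)
    (hf : IsVacuumPreserving B f φ) (hv₀ : φ v₀ = 0) (h0 : (0 : X) ∈ B + B)
    (hblock : ∀ w w' : (B + B : Finset X) → A,
      (∀ v : (B + B : Finset X), (v : X) ≠ 0 → w v = w' v) →
      blockSum B f φ w' - blockSum B f φ w = φ (w' ⟨0, h0⟩) - φ (w ⟨0, h0⟩))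
    (a : X → A) (ha : (Function.support fun x => φ (a x)).Finite) :
    ∑ᶠ x, φ (induce B f a x) = ∑ᶠ x, φ (a x) := by
  suffices ∀ s : Finset X, ∀ a : X → A, (Function.support fun x => φ (a x)) ⊆ s →
      ∑ᶠ x, φ (induce B f a x) = ∑ᶠ x, φ (a x) from this ha.toFinset a (by simp)
  intro s
  induction s using Finset.induction_on with
  | empty =>
    intro a ha
    have hzero (x : X) : φ (a x) = 0 := Function.notMem_support.mp fun hx => by
      simpa using ha hx
    have hzero_induce (x : X) : φ (induce B f a x) = 0 := hf _ fun _ => hzero _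
    simp only [hzero, hzero_induce, finsum_zero]
  | insert p s _ ih =>
    intro a ha
    let a₀ := Function.update a p v₀
    have hoff : ∀ y ≠ p, a₀ y = a y := fun y hy => Function.update_of_ne hy _ _
    have ha₀ : (Function.support fun x => φ (a₀ x)) ⊆ s := fun x hx => by
      rcases eq_or_ne x p with rfl | hxp
      · exact absurd (by simp only [a₀, Function.update_self, hv₀]) hx
      · refine (Finset.mem_insert.mp (ha ?_)).resolve_left hxp
        rwa [Function.mem_support, ← hoff x hxp]
    have hfin : (Function.support fun x => φ (a x)).Finite := (insert p s).finite_toSet.subset ha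
    have hfin₀ : (Function.support fun x => φ (a₀ x)).Finite := s.finite_toSet.subset ha₀
    have hstep : ∑ᶠ x, φ (induce B f a x) - ∑ᶠ x, φ (induce B f a₀ x) =
        ∑ᶠ x, φ (a x) - ∑ᶠ x, φ (a₀ x) := calc
      _ = blockSum B f φ (blockAt B a p) - blockSum B f φ (blockAt B a₀ p) :=
        finsum_induce_sub_eq_blockSum_sub hBsym hf hfin₀ hfin hoff
      _ = φ (a p) - φ (a₀ p) := by
        rw [hblock (blockAt B a₀ p) (blockAt B a p) fun v hv => hoff _ (by simpa using hv)]
        simp only [blockAt, add_zero]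
      _ = ∑ᶠ x, φ (a x) - ∑ᶠ x, φ (a₀ x) :=
        (finsum_sub_finsum_of_eq_off hfin₀ hfin hoff).symm
    rw [ih a₀ ha₀] at hstep
    exact sub_left_inj.mp hstep

end

theorem stmt0 {X A : Type*} [AddCommGroup X] [DecidableEq X]
    (B : Finset X) (hB0 : (0 : X) ∈ B) (hBsym : ∀ b : X, b ∈ B ↔ -b ∈ B)
    (f : (B → A) → A) (φ : A → ℝ)
    (hvac : ∃ a : A, φ a = 0)
    (hfvac : ∀ w : B → A, (∀ b, φ (w b) = 0) → φ (f w) = 0) :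
    conserved B f φ ↔
      ∀ w w' : ((B + B : Finset X) : Type _) → A,
        (∀ v : ((B + B : Finset X) : Type _), (v : X) ≠ 0 → w v = w' v) →
        ((∑ v : B, φ (f fun b => w' ⟨v.1 + b.1, Finset.add_mem_add v.2 b.2⟩)) -
          ∑ v : B, φ (f fun b => w ⟨v.1 + b.1, Finset.add_mem_add v.2 b.2⟩))
          = φ (w' ⟨0, by simpa using Finset.add_mem_add hB0 hB0⟩) -
            φ (w ⟨0, by simpa using Finset.add_mem_add hB0 hB0⟩) := by
  obtain ⟨v₀, hv₀⟩ := hvac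
  have h0 : (0 : X) ∈ B + B := by simpa using Finset.add_mem_add hB0 hB0
  constructor
  · rintro ⟨-, -, hcons⟩
    exact blockSum_sub_blockSum_of_finsum_eq hBsym hfvac hv₀ hcons h0
  · intro hblock
    exact ⟨⟨v₀, hv₀⟩, fun _ => finite_support_comp_induce hfvac,
      finsum_induce_eq_of_blockSum_sub_blockSum hBsym hfvac hv₀ h0 hblock⟩
end

section
/- Let K be a subgroup of X of finite index, let π : X → X̃ := X/K be the quotient map, and assume π is injective on B² = B + B. Let F̃ : (X̃ → A) → (X̃ → A) be the induced cellular automaton, F̃(ã)(x̃) = f(b ↦ ã(x̃ + π(b))), and for ã : X̃ → A set Σφ(ã) = ∑_{x̃ ∈ X̃} φ(ã(x̃)). Assume φ⁻¹({0}) ≠ ∅ and that f is vacuum-preserving. Then φ is conserved by F if and only if Σφ(F̃(ã)) = Σφ(ã) for every ã : X̃ → A. -/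
open scoped Pointwise

section Aux

variable {X Y A : Type*} [AddCommGroup X] [AddCommGroup Y]
variable (B : Finset X) (f : (B → A) → A) (φ : A → ℝ)

/-- The CA induced along a homomorphism `ι`. -/
def cind (ι : X →+ Y) (a : Y → A) : Y → A := fun y => f fun b => a (y + ι b.1)

open Classical in
/-- The local defect of conservation when the cell at `0` is updated to `β`
over a background pattern `q`. -/
noncomputable def Del (q : X → A) (β : A) : ℝ :=
  ((∑ b ∈ B, φ (f fun b' : B => Function.update q 0 β (b'.1 - b))) -
    ∑ b ∈ B, φ (f fun b' : B => q (b'.1 - b))) - (φ β - φ (q 0))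

variable {B f φ}

lemma mem_BB_of_mem {b : X} (hB0 : (0 : X) ∈ B) (hb : b ∈ B) :
    b ∈ (B : Set X) + (B : Set X) := by
  simpa using Set.add_mem_add (Finset.mem_coe.mpr hb) (Finset.mem_coe.mpr hB0)

lemma zero_mem_BB (hB0 : (0 : X) ∈ B) : (0 : X) ∈ (B : Set X) + (B : Set X) :=
  mem_BB_of_mem hB0 hB0

lemma sub_mem_BB (hBsym : ∀ b : X, b ∈ B ↔ -b ∈ B) (b' : B) {b : X} (hb : b ∈ B) :
    (b'.1 - b) ∈ (B : Set X) + (B : Set X) := by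
  have := Set.add_mem_add (Finset.mem_coe.mpr b'.2) (Finset.mem_coe.mpr ((hBsym b).1 hb))
  simpa [sub_eq_add_neg] using this

lemma Del_congr (hB0 : (0 : X) ∈ B) (hBsym : ∀ b : X, b ∈ B ↔ -b ∈ B)
    {q q' : X → A} (hq : ∀ z ∈ (B : Set X) + (B : Set X), q z = q' z) (β : A) :
    Del B f φ q β = Del B f φ q' β := by
  classical
  unfold Del
  rw [hq 0 (zero_mem_BB hB0)]
  have e1 : ∀ b ∈ B, (φ (f fun b' : B => q (b'.1 - b))) =
      φ (f fun b' : B => q' (b'.1 - b)) := by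
    intro b hb
    congr 1
    congr 1
    funext b'
    exact hq _ (sub_mem_BB hBsym b' hb)
  have e2 : ∀ b ∈ B, (φ (f fun b' : B => Function.update q 0 β (b'.1 - b))) =
      φ (f fun b' : B => Function.update q' 0 β (b'.1 - b)) := by
    intro b hb
    congr 1
    congr 1
    funext b'
    by_cases h0 : b'.1 - b = 0
    · rw [h0, Function.update_self, Function.update_self]
    · rw [Function.update_of_ne h0, Function.update_of_ne h0]
      exact hq _ (sub_mem_BB hBsym b' hb)
  rw [Finset.sum_congr rfl e1, Finset.sum_congr rfl e2]

lemma supp_cind (hfvac : ∀ w : B → A, (∀ b, φ (w b) = 0) → φ (f w) = 0)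
    (ι : X →+ Y) (a : Y → A) (h : (Function.support fun y => φ (a y)).Finite) :
    (Function.support fun y => φ (cind B f ι a y)).Finite := by
  apply Set.Finite.subset (Set.Finite.biUnion B.finite_toSet
    (fun b _ => h.image (fun y => y - ι b)))
  intro y hy
  simp only [Function.mem_support] at hy
  by_contra hmem
  apply hy
  apply hfvac
  intro b
  by_contra hb
  apply hmem
  refine Set.mem_biUnion (Finset.mem_coe.mpr b.2)
    ⟨y + ι b.1, Function.mem_support.mpr hb, ?_⟩
  show y + ι b.1 - ι b.1 = y
  exact add_sub_cancel_right _ _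

lemma increment [DecidableEq Y] (hB0 : (0 : X) ∈ B) (hBsym : ∀ b : X, b ∈ B ↔ -b ∈ B)
    (hfvac : ∀ w : B → A, (∀ b, φ (w b) = 0) → φ (f w) = 0)
    (ι : X →+ Y) (hι : Set.InjOn ι ((B : Set X) + (B : Set X)))
    (a : Y → A) (h : (Function.support fun y => φ (a y)).Finite) (y₀ : Y) (β : A) :
    ((∑ᶠ y, φ (cind B f ι (Function.update a y₀ β) y)) - ∑ᶠ y, φ (cind B f ι a y))
      - ((∑ᶠ y, φ (Function.update a y₀ β y)) - ∑ᶠ y, φ (a y))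
      = Del B f φ (fun z => a (y₀ + ι z)) β := by
  classical
  set a' := Function.update a y₀ β with ha'
  set q : X → A := fun z => a (y₀ + ι z) with hqdef
  have hker : ∀ z ∈ (B : Set X) + (B : Set X), ι z = 0 → z = 0 := by
    intro z hz h0
    exact hι hz (zero_mem_BB hB0) (by simpa using h0)
  have h' : (Function.support fun y => φ (a' y)).Finite := by
    apply (h.union (Set.finite_singleton y₀)).subset
    intro y hy
    by_cases hyy : y = y₀
    · exact Or.inr hyy
    · left
      simpa [ha', Function.update_of_ne hyy] using hy
  have hF := supp_cind hfvac ι a h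
  have hF' := supp_cind hfvac ι a' h'
  -- pointwise computations
  have key0 : ∀ b ∈ B, cind B f ι a (y₀ - ι b) = f fun b' : B => q (b'.1 - b) := by
    intro b hb
    unfold cind
    congr 1
    funext b'
    simp only [hqdef]
    congr 1
    rw [map_sub]
    abel
  have key1 : ∀ b ∈ B, cind B f ι a' (y₀ - ι b) =
      f fun b' : B => Function.update q 0 β (b'.1 - b) := by
    intro b hb
    unfold cind
    congr 1
    funext b'
    have hz : (b'.1 - b) ∈ (B : Set X) + (B : Set X) := sub_mem_BB hBsym b' hb
    by_cases hz0 : b'.1 - b = 0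
    · have hb' : (b'.1 : X) = b := by rwa [sub_eq_zero] at hz0
      rw [hz0, Function.update_self]
      have heq : y₀ - ι b + ι b'.1 = y₀ := by rw [hb']; abel
      rw [heq, ha', Function.update_self]
    · rw [Function.update_of_ne hz0]
      have hne : y₀ - ι b + ι b'.1 ≠ y₀ := by
        intro hEq
        apply hz0
        apply hker _ hz
        rw [map_sub]
        have hrw : ι b'.1 - ι b = y₀ - ι b + ι b'.1 - y₀ := by abel
        rw [hrw, hEq]
        abel
      rw [ha', Function.update_of_ne hne, hqdef]
      congr 1
      rw [map_sub]
      abel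
  -- the F-part difference
  have e1 : (∑ᶠ y, φ (cind B f ι a' y)) - ∑ᶠ y, φ (cind B f ι a y)
      = ∑ᶠ y, (φ (cind B f ι a' y) - φ (cind B f ι a y)) :=
    (finsum_sub_distrib hF' hF).symm
  have hsub : (Function.support fun y => φ (cind B f ι a' y) - φ (cind B f ι a y))
      ⊆ ↑(B.image fun b => y₀ - ι b) := by
    intro y hy
    simp only [Function.mem_support] at hy
    by_contra hmem
    apply hy
    have hagree : (fun b' : B => a' (y + ι b'.1)) = fun b' : B => a (y + ι b'.1) := by
      funext b'
      apply Function.update_of_ne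
      intro hEq
      apply hmem
      simp only [Finset.coe_image, Set.mem_image, Finset.mem_coe]
      refine ⟨b'.1, b'.2, ?_⟩
      show y₀ - ι b'.1 = y
      rw [← hEq]
      exact add_sub_cancel_right _ _
    show φ (cind B f ι a' y) - φ (cind B f ι a y) = 0
    unfold cind
    rw [hagree, sub_self]
  have e2 : ∑ᶠ y, (φ (cind B f ι a' y) - φ (cind B f ι a y))
      = ∑ y ∈ B.image (fun b => y₀ - ι b),
          (φ (cind B f ι a' y) - φ (cind B f ι a y)) :=
    finsum_eq_finset_sum_of_support_subset _ hsub
  have hinjB : ∀ x ∈ B, ∀ y ∈ B, y₀ - ι x = y₀ - ι y → x = y := by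
    intro x hx y hy hxy
    apply hι (mem_BB_of_mem hB0 hx) (mem_BB_of_mem hB0 hy)
    have hsz : ι x - ι y = (y₀ - ι y) - (y₀ - ι x) := by abel
    rw [hxy, sub_self] at hsz
    exact (sub_eq_zero.mp hsz)
  have e3 : (∑ y ∈ B.image (fun b => y₀ - ι b),
        (φ (cind B f ι a' y) - φ (cind B f ι a y)))
      = ∑ b ∈ B, (φ (cind B f ι a' (y₀ - ι b)) - φ (cind B f ι a (y₀ - ι b))) :=
    Finset.sum_image hinjB
  have e4 : (∑ b ∈ B, (φ (cind B f ι a' (y₀ - ι b)) - φ (cind B f ι a (y₀ - ι b))))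
      = (∑ b ∈ B, φ (f fun b' : B => Function.update q 0 β (b'.1 - b))) -
        ∑ b ∈ B, φ (f fun b' : B => q (b'.1 - b)) := by
    rw [← Finset.sum_sub_distrib]
    apply Finset.sum_congr rfl
    intro b hb
    rw [key0 b hb, key1 b hb]
  -- the state-part difference
  have e5 : (∑ᶠ y, φ (a' y)) - ∑ᶠ y, φ (a y) = ∑ᶠ y, (φ (a' y) - φ (a y)) :=
    (finsum_sub_distrib h' h).symm
  have e6 : ∑ᶠ y, (φ (a' y) - φ (a y)) = φ β - φ (a y₀) := by
    rw [finsum_eq_single _ y₀]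
    · rw [ha', Function.update_self]
    · intro y hy
      rw [ha', Function.update_of_ne hy, sub_self]
  have hq0 : q 0 = a y₀ := by simp [hqdef]
  unfold Del
  rw [hq0, e1, e2, e3, e4, e5, e6]

lemma buildup [DecidableEq Y] (hB0 : (0 : X) ∈ B) (hBsym : ∀ b : X, b ∈ B ↔ -b ∈ B)
    (hfvac : ∀ w : B → A, (∀ b, φ (w b) = 0) → φ (f w) = 0)
    (v : A) (hv : φ v = 0)
    (ι : X →+ Y) (hι : Set.InjOn ι ((B : Set X) + (B : Set X)))
    (hΔ : ∀ (q : X → A) (β : A), Del B f φ q β = 0) :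
    ∀ (a : Y → A), (Function.support fun y => φ (a y)).Finite →
      ∑ᶠ y, φ (cind B f ι a y) = ∑ᶠ y, φ (a y) := by
  classical
  have key : ∀ (n : ℕ) (a : Y → A) (h : (Function.support fun y => φ (a y)).Finite),
      h.toFinset.card ≤ n → ∑ᶠ y, φ (cind B f ι a y) = ∑ᶠ y, φ (a y) := by
    intro n
    induction n with
    | zero =>
      intro a h hc
      have hempty : ∀ y, φ (a y) = 0 := by
        intro y
        by_contra hy
        have hmem : y ∈ h.toFinset := by
          rw [Set.Finite.mem_toFinset]
          exact Function.mem_support.mpr hy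
        have := Finset.card_pos.mpr ⟨y, hmem⟩
        omega
      rw [finsum_eq_zero_of_forall_eq_zero hempty,
        finsum_eq_zero_of_forall_eq_zero]
      intro y
      exact hfvac _ (fun b => hempty _)
    | succ n ih =>
      intro a h hc
      by_cases hzero : ∀ y, φ (a y) = 0
      · rw [finsum_eq_zero_of_forall_eq_zero hzero,
          finsum_eq_zero_of_forall_eq_zero]
        intro y
        exact hfvac _ (fun b => hzero _)
      · push_neg at hzero
        obtain ⟨y₀, hy₀⟩ := hzero
        set a₀ := Function.update a y₀ v with ha₀
        have h₀ : (Function.support fun y => φ (a₀ y)).Finite := by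
          apply h.subset
          intro y hy
          by_cases hyy : y = y₀
          · exfalso
            apply Function.mem_support.mp hy
            rw [hyy, ha₀, Function.update_self, hv]
          · have := Function.mem_support.mp hy
            rw [ha₀, Function.update_of_ne hyy] at this
            exact Function.mem_support.mpr this
        have hsubset : h₀.toFinset ⊆ h.toFinset.erase y₀ := by
          intro y hy
          rw [Set.Finite.mem_toFinset] at hy
          have hyy : y ≠ y₀ := by
            intro hEq
            apply Function.mem_support.mp hy
            rw [hEq, ha₀, Function.update_self, hv]
          refine Finset.mem_erase.mpr ⟨hyy, ?_⟩
          rw [Set.Finite.mem_toFinset]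
          have := Function.mem_support.mp hy
          rw [ha₀, Function.update_of_ne hyy] at this
          exact Function.mem_support.mpr this
        have hy₀mem : y₀ ∈ h.toFinset := by
          rw [Set.Finite.mem_toFinset]
          exact Function.mem_support.mpr hy₀
        have hcard : h₀.toFinset.card ≤ n := by
          have h1 := Finset.card_le_card hsubset
          have h2 := Finset.card_erase_of_mem hy₀mem
          omega
        have IH := ih a₀ h₀ hcard
        have hinc := increment hB0 hBsym hfvac ι hι a₀ h₀ y₀ (a y₀)
        have hupd : Function.update a₀ y₀ (a y₀) = a := by
          rw [ha₀, Function.update_idem, Function.update_eq_self]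
        rw [hupd, hΔ] at hinc
        linarith
  intro a h
  exact key h.toFinset.card a h le_rfl

lemma del_zero [DecidableEq Y] (hB0 : (0 : X) ∈ B) (hBsym : ∀ b : X, b ∈ B ↔ -b ∈ B)
    (hfvac : ∀ w : B → A, (∀ b, φ (w b) = 0) → φ (f w) = 0)
    (v : A) (hv : φ v = 0)
    (ι : X →+ Y) (hι : Set.InjOn ι ((B : Set X) + (B : Set X)))
    (hcons : ∀ a : Y → A, (Function.support fun y => φ (a y)).Finite →
      ∑ᶠ y, φ (cind B f ι a y) = ∑ᶠ y, φ (a y))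
    (q : X → A) (β : A) : Del B f φ q β = 0 := by
  classical
  set S : Set X := (B : Set X) + (B : Set X) with hS
  have hSfin : S.Finite := (B.finite_toSet.add B.finite_toSet)
  set e : S → Y := fun z => ι z.1 with he
  have heinj : Function.Injective e := by
    intro z w hzw
    exact Subtype.ext (hι z.2 w.2 hzw)
  set c : Y → A := Function.extend e (fun z => q z.1) (fun _ => v) with hc
  have hcval : ∀ z ∈ S, c (ι z) = q z := by
    intro z hz
    have : c (e ⟨z, hz⟩) = q z := heinj.extend_apply _ _ _
    exact this
  have hcsupp : (Function.support fun y => φ (c y)).Finite := by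
    apply (hSfin.image ι).subset
    intro y hy
    by_contra hmem
    apply Function.mem_support.mp hy
    have : c y = v := by
      rw [hc]
      apply Function.extend_apply'
      intro ⟨z, hzy⟩
      exact hmem ⟨z.1, z.2, hzy⟩
    rw [this, hv]
  have hcsupp' : (Function.support fun y => φ (Function.update c 0 β y)).Finite := by
    apply (hcsupp.union (Set.finite_singleton 0)).subset
    intro y hy
    by_cases hyy : y = (0 : Y)
    · exact Or.inr hyy
    · left
      have := Function.mem_support.mp hy
      rw [Function.update_of_ne hyy] at this
      exact Function.mem_support.mpr this
  have hinc := increment hB0 hBsym hfvac ι hι c hcsupp 0 β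
  rw [hcons c hcsupp, hcons _ hcsupp'] at hinc
  have hz : Del B f φ (fun z => c (0 + ι z)) β = 0 := by
    rw [← hinc]; ring
  rw [Del_congr hB0 hBsym (q' := fun z => c (0 + ι z)) ?_ β, hz]
  intro z hzS
  show q z = c (0 + ι z)
  rw [zero_add, hcval z hzS]

end Aux

theorem stmt1 {X A : Type*} [AddCommGroup X] [Fintype A] [Nonempty A]
    (B : Finset X) (hB0 : (0 : X) ∈ B) (hBsym : ∀ b : X, b ∈ B ↔ -b ∈ B)
    (f : (B → A) → A) (φ : A → ℝ)
    (K : AddSubgroup X) [Finite (X ⧸ K)]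
    (hinj : Set.InjOn (QuotientAddGroup.mk' K) ((B : Set X) + (B : Set X)))
    (hvac : ∃ a : A, φ a = 0)
    (hfvac : ∀ w : B → A, (∀ b, φ (w b) = 0) → φ (f w) = 0) :
    conserved B f φ ↔
      ∀ c : (X ⧸ K) → A,
        (∑ᶠ x : X ⧸ K, φ (f fun b => c (x + QuotientAddGroup.mk' K b.1))) =
          ∑ᶠ x : X ⧸ K, φ (c x) := by
  classical
  obtain ⟨v, hv⟩ := hvac
  have hid : Set.InjOn (AddMonoidHom.id X) ((B : Set X) + (B : Set X)) :=
    fun x _ y _ h => by simpa using h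
  have hindeq : ∀ a : X → A, induce B f a = cind B f (AddMonoidHom.id X) a :=
    fun a => rfl
  constructor
  · rintro ⟨-, -, hsum⟩
    have hcons : ∀ a : X → A, (Function.support fun x => φ (a x)).Finite →
        ∑ᶠ x, φ (cind B f (AddMonoidHom.id X) a x) = ∑ᶠ x, φ (a x) := by
      intro a ha
      rw [← hindeq]
      exact hsum a ha
    have hΔ := del_zero hB0 hBsym hfvac v hv (AddMonoidHom.id X) hid hcons
    intro c
    exact buildup hB0 hBsym hfvac v hv (QuotientAddGroup.mk' K) hinj hΔ c
      (Set.toFinite _)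
  · intro hq
    have hΔ := del_zero hB0 hBsym hfvac v hv (QuotientAddGroup.mk' K) hinj
      (fun c _ => hq c)
    refine ⟨⟨v, hv⟩, ?_, ?_⟩
    · intro a ha
      rw [hindeq]
      exact supp_cind hfvac (AddMonoidHom.id X) a ha
    · intro a ha
      rw [hindeq]
      exact buildup hB0 hBsym hfvac v hv (AddMonoidHom.id X) hid hΔ a ha
end

section
/- Assume φ : A → ℝ takes only nonnegative values and φ⁻¹({0}) ≠ ∅. For W ⊆ X define cl(W) = B + W and int(W) = {w ∈ W : B + w ⊆ W}, and for a : X → A and a finite set U ⊆ X write Σφ(a)|_U = ∑_{u ∈ U} φ(a(u)). Then φ is conserved by F if and only if for every configuration a : X → A and every finite subset W ⊆ X, one has Σφ(a)|_{int(W)} ≤ Σφ(F(a))|_W ≤ Σφ(a)|_{cl(W)}. -/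
open scoped Pointwise

private lemma sum_le_of_mem_aux {X : Type*} [DecidableEq X] {g : X → ℝ}
    (hg : ∀ x, 0 ≤ g x) {s t : Finset X} (h : ∀ x ∈ s, g x ≠ 0 → x ∈ t) :
    ∑ x ∈ s, g x ≤ ∑ x ∈ t, g x := by
  classical
  rw [← Finset.sum_filter_ne_zero s]
  exact Finset.sum_le_sum_of_subset_of_nonneg
    (fun x hx => h x (Finset.mem_filter.1 hx).1 (Finset.mem_filter.1 hx).2)
    (fun x _ _ => hg x)

/-- Upper bound from conservation: key lemma. -/
private lemma upper_aux {X A : Type*} [AddCommGroup X] [DecidableEq X]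
    (B : Finset X) (hB0 : (0 : X) ∈ B) (hBsym : ∀ b : X, b ∈ B ↔ -b ∈ B)
    (f : (B → A) → A) (φ : A → ℝ) (hpos : ∀ a : A, 0 ≤ φ a)
    {v : A} (hv : φ v = 0) (hvf : φ (f (fun _ => v)) = 0)
    (hC : conserved B f φ) (a : X → A) (W : Finset X) :
    (∑ w ∈ W.filter (fun w => ∀ b ∈ B, b + w ∈ W), φ (a w)
        ≤ ∑ w ∈ W, φ (induce B f a w)) ∧
    (∑ w ∈ W, φ (induce B f a w) ≤ ∑ w ∈ B + W, φ (a w)) := by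
  classical
  obtain ⟨_, hfin, hsum⟩ := hC
  -- facts about the truncation of a configuration to B + W
  have key : ∀ (a : X → A) (W : Finset X),
      ∃ a' : X → A,
        (∀ x ∈ B + W, a' x = a x) ∧
        (∀ x ∈ W, induce B f a' x = induce B f a x) ∧
        (Function.support fun x => φ (a' x)) ⊆ ↑(B + W) ∧
        (Function.support fun x => φ (induce B f a' x)) ⊆ ↑(B + (B + W)) := by
    intro a W
    refine ⟨fun x => if x ∈ B + W then a x else v, fun x hx => if_pos hx, ?_, ?_, ?_⟩
    · intro x hx
      unfold induce
      congr 1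
      funext b
      show (if x + b.1 ∈ B + W then a (x + b.1) else v) = a (x + b.1)
      exact if_pos (add_comm x b.1 ▸ Finset.add_mem_add b.2 hx)
    · intro x hx
      by_contra hmem
      apply hx
      show φ (if x ∈ B + W then a x else v) = 0
      rw [if_neg (fun hh => hmem (Finset.mem_coe.2 hh))]
      exact hv
    · intro x hx
      by_contra hmem
      apply hx
      have hvall : ∀ b : {y // y ∈ B}, (if x + b.1 ∈ B + W then a (x + b.1) else v) = v := by
        intro b
        apply if_neg
        intro hin
        apply hmem
        have : -b.1 + (x + b.1) = x := by abel
        exact Finset.mem_coe.2 (this ▸ Finset.add_mem_add ((hBsym b.1).1 b.2) hin)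
      simp only [induce, hvall]
      exact hvf
  have hWsub : ∀ W : Finset X, W ⊆ B + (B + W) := by
    intro W w hw
    have h1 : w ∈ B + W := zero_add w ▸ Finset.add_mem_add hB0 hw
    exact zero_add w ▸ Finset.add_mem_add hB0 h1
  -- the upper bound, for every configuration and window
  have ub : ∀ (a : X → A) (W : Finset X),
      ∑ w ∈ W, φ (induce B f a w) ≤ ∑ w ∈ B + W, φ (a w) := by
    intro a W
    obtain ⟨a', ha'eq, ha'ind, hs1, hs2⟩ := key a W
    have hfin1 : (Function.support fun x => φ (a' x)).Finite :=
      Set.Finite.subset (B + W).finite_toSet hs1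
    have e1 : ∑ᶠ x, φ (a' x) = ∑ w ∈ B + W, φ (a' w) :=
      finsum_eq_sum_of_support_subset _ hs1
    have e2 : ∑ᶠ x, φ (induce B f a' x) = ∑ w ∈ B + (B + W), φ (induce B f a' w) :=
      finsum_eq_sum_of_support_subset _ hs2
    have e3 := hsum a' hfin1
    calc ∑ w ∈ W, φ (induce B f a w) = ∑ w ∈ W, φ (induce B f a' w) :=
          (Finset.sum_congr rfl fun w hw => by rw [ha'ind w hw]).symm
      _ ≤ ∑ w ∈ B + (B + W), φ (induce B f a' w) :=
          Finset.sum_le_sum_of_subset_of_nonneg (hWsub W) (fun x _ _ => hpos _)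
      _ = ∑ w ∈ B + W, φ (a' w) := by rw [← e2, e3, e1]
      _ = ∑ w ∈ B + W, φ (a w) := Finset.sum_congr rfl fun w hw => by rw [ha'eq w hw]
  refine ⟨?_, ub a W⟩
  -- lower bound
  obtain ⟨a', ha'eq, ha'ind, hs1, hs2⟩ := key a W
  have hfin1 : (Function.support fun x => φ (a' x)).Finite :=
    Set.Finite.subset (B + W).finite_toSet hs1
  have e1 : ∑ᶠ x, φ (a' x) = ∑ w ∈ B + W, φ (a' w) :=
    finsum_eq_sum_of_support_subset _ hs1
  have e2 : ∑ᶠ x, φ (induce B f a' x) = ∑ w ∈ B + (B + W), φ (induce B f a' w) :=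
    finsum_eq_sum_of_support_subset _ hs2
  have e3 := hsum a' hfin1
  set I : Finset X := W.filter (fun w => ∀ b ∈ B, b + w ∈ W) with hI
  have hIW : I ⊆ B + W := fun x hx =>
    zero_add x ▸ Finset.add_mem_add hB0 (Finset.filter_subset _ _ hx)
  -- sum over the outer ring
  have hring : ∑ w ∈ (B + (B + W)) \ W, φ (induce B f a' w)
      = ∑ w ∈ B + (B + W), φ (induce B f a' w) - ∑ w ∈ W, φ (induce B f a' w) :=
    Finset.sum_sdiff_eq_sub (hWsub W)
  have hDsum : ∑ w ∈ (B + W) \ I, φ (a' w)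
      = ∑ w ∈ B + W, φ (a' w) - ∑ w ∈ I, φ (a' w) :=
    Finset.sum_sdiff_eq_sub hIW
  -- ring is controlled by the boundary
  have hringle : ∑ w ∈ (B + (B + W)) \ W, φ (induce B f a' w)
      ≤ ∑ w ∈ (B + W) \ I, φ (a' w) := by
    refine le_trans (ub a' ((B + (B + W)) \ W)) ?_
    apply sum_le_of_mem_aux (g := fun w => φ (a' w)) (fun x => hpos (a' x))
    intro x hx hne
    obtain ⟨b, hb, u, hu, rfl⟩ := Finset.mem_add.1 hx
    obtain ⟨-, huW⟩ := Finset.mem_sdiff.1 hu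
    refine Finset.mem_sdiff.2 ⟨?_, ?_⟩
    · exact Finset.mem_coe.1 (hs1 hne)
    · rw [hI]
      intro hmem
      obtain ⟨-, hall⟩ := Finset.mem_filter.1 hmem
      apply huW
      have := hall (-b) ((hBsym b).1 hb)
      rwa [show -b + (b + u) = u by abel] at this
  have hIa : ∑ w ∈ I, φ (a' w) = ∑ w ∈ I, φ (a w) :=
    Finset.sum_congr rfl fun w hw => by rw [ha'eq w (hIW hw)]
  have hWeq : ∑ w ∈ W, φ (induce B f a w) = ∑ w ∈ W, φ (induce B f a' w) :=
    (Finset.sum_congr rfl fun w hw => by rw [ha'ind w hw]).symm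
  have etot : ∑ w ∈ B + (B + W), φ (induce B f a' w) = ∑ w ∈ B + W, φ (a' w) := by
    rw [← e2, e3, e1]
  linarith

theorem stmt5 {X A : Type*} [AddCommGroup X] [DecidableEq X] [Fintype A] [Nonempty A]
    (B : Finset X) (hB0 : (0 : X) ∈ B) (hBsym : ∀ b : X, b ∈ B ↔ -b ∈ B)
    (f : (B → A) → A) (φ : A → ℝ)
    (hpos : ∀ a : A, 0 ≤ φ a) (hvac : ∃ a : A, φ a = 0) :
    conserved B f φ ↔
      ∀ (a : X → A) (W : Finset X),
        (∑ w ∈ W.filter (fun w => ∀ b ∈ B, b + w ∈ W), φ (a w)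
            ≤ ∑ w ∈ W, φ (induce B f a w)) ∧
        (∑ w ∈ W, φ (induce B f a w) ≤ ∑ w ∈ B + W, φ (a w)) := by
  classical
  obtain ⟨v, hv⟩ := hvac
  constructor
  · intro hC
    -- first: φ (f (const v)) = 0
    have hvf : φ (f (fun _ => v)) = 0 := by
      obtain ⟨hvac', hfin, hsum⟩ := hC
      have h0 : (Function.support fun x : X => φ (v : A)).Finite := by
        simpa [hv] using Set.finite_empty
      have hfin' := hfin (fun _ => v) h0
      have hs := hsum (fun _ => v) h0
      have h2 : (∑ᶠ x : X, φ v) = 0 := by simp [hv]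
      rw [h2] at hs
      rw [finsum_eq_sum _ hfin'] at hs
      have := (Finset.sum_eq_zero_iff_of_nonneg (fun x _ => hpos _)).1 hs
      by_contra hne
      have hmem : (0 : X) ∈ hfin'.toFinset := by
        simp only [Set.Finite.mem_toFinset, Function.mem_support]
        simpa [induce] using hne
      exact hne (by simpa [induce] using this 0 hmem)
    exact upper_aux B hB0 hBsym f φ hpos hv hvf hC
  · intro h
    refine ⟨⟨v, hv⟩, ?_, ?_⟩
    · intro a ha
      apply Set.Finite.subset (Set.Finite.image (fun p : X × X => p.1 + p.2)
        (Set.Finite.prod (B.finite_toSet) ha))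
      intro x hx
      have hx' : φ (induce B f a x) ≠ 0 := hx
      have h2 := (h a {x}).2
      have hlt : 0 < ∑ w ∈ ({x} : Finset X), φ (induce B f a w) := by
        rw [Finset.sum_singleton]
        exact lt_of_le_of_ne (hpos _) (Ne.symm hx')
      have hpos2 : 0 < ∑ w ∈ B + {x}, φ (a w) := lt_of_lt_of_le hlt h2
      obtain ⟨w, hwmem, hwne⟩ := Finset.exists_ne_zero_of_sum_ne_zero (ne_of_gt hpos2)
      obtain ⟨b, hb, z, hz, rfl⟩ := Finset.mem_add.1 hwmem
      rw [Finset.mem_singleton] at hz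
      subst hz
      exact ⟨(-b, b + z), ⟨(hBsym b).1 hb, hwne⟩, neg_add_cancel_left b z⟩
    · intro a ha
      have hFfin : (Function.support fun x => φ (induce B f a x)).Finite := by
        -- same as above; extract
        apply Set.Finite.subset (Set.Finite.image (fun p : X × X => p.1 + p.2)
          (Set.Finite.prod (B.finite_toSet) ha))
        intro x hx
        have hx' : φ (induce B f a x) ≠ 0 := hx
        have h2 := (h a {x}).2
        have hlt : 0 < ∑ w ∈ ({x} : Finset X), φ (induce B f a w) := by
          rw [Finset.sum_singleton]
          exact lt_of_le_of_ne (hpos _) (Ne.symm hx')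
        have hpos2 : 0 < ∑ w ∈ B + {x}, φ (a w) := lt_of_lt_of_le hlt h2
        obtain ⟨w, hwmem, hwne⟩ := Finset.exists_ne_zero_of_sum_ne_zero (ne_of_gt hpos2)
        obtain ⟨b, hb, z, hz, rfl⟩ := Finset.mem_add.1 hwmem
        rw [Finset.mem_singleton] at hz
        subst hz
        exact ⟨(-b, b + z), ⟨(hBsym b).1 hb, hwne⟩, neg_add_cancel_left b z⟩
      set S : Finset X := ha.toFinset ∪ hFfin.toFinset with hS
      set W : Finset X := B + S with hWdef
      have hsubS : ∀ s ∈ S, s ∈ W := fun s hs => by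
        rw [hWdef]; simpa using Finset.add_mem_add hB0 hs
      have hsuppa : Function.support (fun x => φ (a x)) ⊆ ↑S := fun x hx => by
        simp [hS, Set.Finite.mem_toFinset]; left; exact hx
      have hsuppFa : Function.support (fun x => φ (induce B f a x)) ⊆ ↑S := fun x hx => by
        simp [hS, Set.Finite.mem_toFinset]; right; exact hx
      have e1 : ∑ᶠ x, φ (induce B f a x) = ∑ w ∈ W, φ (induce B f a w) :=
        finsum_eq_sum_of_support_subset _ (fun x hx => hsubS x (hsuppFa hx))
      have e2 : ∑ᶠ x, φ (a x)
          = ∑ w ∈ W.filter (fun w => ∀ b ∈ B, b + w ∈ W), φ (a w) := by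
        apply finsum_eq_sum_of_support_subset
        intro x hx
        have hxS : x ∈ S := hsuppa hx
        simp only [Finset.coe_filter, Set.mem_setOf_eq]
        exact ⟨hsubS x hxS, fun b hb => by rw [hWdef]; exact Finset.add_mem_add hb hxS⟩
      have e3 : ∑ᶠ x, φ (a x) = ∑ w ∈ B + W, φ (a w) := by
        apply finsum_eq_sum_of_support_subset
        intro x hx
        have : x ∈ W := hsubS x (hsuppa hx)
        exact Finset.mem_coe.2 (zero_add x ▸ Finset.add_mem_add hB0 this)
      obtain ⟨hlow, hhigh⟩ := h a W
      linarith [hlow, hhigh, e1, e2, e3]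
end

section
/- Assume φ : A → ℝ takes only nonnegative values and φ⁻¹({0}) ≠ ∅. Say a configuration a : ℤ^D → A is φ-stationary with average r ∈ ℝ if for every Følner sequence (I_n) in ℤ^D, (1/|I_n|) ∑_{i ∈ I_n} φ(a(i)) converges to r as n → ∞. Then φ is conserved by F if and only if for every configuration a : ℤ^D → A and every r ∈ ℝ, if a is φ-stationary with average r then F(a) is φ-stationary with average r. -/
/-- A Følner sequence in `ℤ^D`: a sequence of nonempty finite subsets such that for
every `x`, `|I_n ∩ (I_n + x)| / |I_n| → 1`. -/
def IsFolner {D : ℕ} (I : ℕ → Finset (Fin D → ℤ)) : Prop :=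
  (∀ n, (I n).Nonempty) ∧
  ∀ x : Fin D → ℤ,
    Filter.Tendsto
      (fun n => (((I n) ∩ (I n).image (fun y => y + x)).card : ℝ) / ((I n).card : ℝ))
      Filter.atTop (nhds 1)

/-- `a` is `φ`-stationary with average `r`: along every Følner sequence, the spatial
ergodic averages of `φ` on `a` converge to `r`. -/
def StationaryAvg {D : ℕ} {A : Type*} (φ : A → ℝ) (a : (Fin D → ℤ) → A) (r : ℝ) : Prop :=
  ∀ I : ℕ → Finset (Fin D → ℤ), IsFolner I →
    Filter.Tendsto (fun n => (∑ i ∈ I n, φ (a i)) / ((I n).card : ℝ))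
      Filter.atTop (nhds r)

section

open Filter Finset Pointwise Topology

variable {D : ℕ}

namespace IsFolner

variable {I : ℕ → Finset (Fin D → ℤ)}

lemma card_pos (hI : IsFolner I) (n : ℕ) : (0 : ℝ) < #(I n) := by
  exact_mod_cast (hI.1 n).card_pos

lemma tendsto_card_add_sdiff_div (hI : IsFolner I) (K : Finset (Fin D → ℤ)) :
    Tendsto (fun n => (#((I n + K) \ I n) : ℝ) / #(I n)) atTop (𝓝 0) := by
  have hle : ∀ n, (#((I n + K) \ I n) : ℝ) / #(I n) ≤
      ∑ t ∈ K, (1 - (#(I n ∩ (I n).image (· + t)) : ℝ) / #(I n)) := by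
    intro n
    have hsub : (I n + K) \ I n ⊆ K.biUnion fun t => (I n).image (· + t) \ I n := by
      intro x hx
      obtain ⟨hxK, hxI⟩ := mem_sdiff.1 hx
      obtain ⟨y, hy, t, ht, rfl⟩ := mem_add.1 hxK
      exact mem_biUnion.2 ⟨t, ht, mem_sdiff.2 ⟨mem_image_of_mem _ hy, hxI⟩⟩
    have hcard : ∀ t, (#((I n).image (· + t) \ I n) : ℝ) =
        #(I n) - #(I n ∩ (I n).image (· + t)) := by
      intro t
      have h := card_sdiff_add_card_inter ((I n).image (· + t)) (I n)
      rw [inter_comm, card_image_of_injective _ (add_left_injective t)] at h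
      rw [eq_sub_iff_add_eq]
      exact_mod_cast h
    calc (#((I n + K) \ I n) : ℝ) / #(I n)
        ≤ (∑ t ∈ K, (#((I n).image (· + t) \ I n) : ℝ)) / #(I n) := by
          gcongr
          exact_mod_cast (card_le_card hsub).trans card_biUnion_le
      _ = ∑ t ∈ K, (1 - (#(I n ∩ (I n).image (· + t)) : ℝ) / #(I n)) := by
          rw [sum_div]
          refine sum_congr rfl fun t _ => ?_
          rw [hcard, sub_div, div_self (hI.card_pos n).ne']
  have hlim : Tendsto (fun n => ∑ t ∈ K, (1 - (#(I n ∩ (I n).image (· + t)) : ℝ) / #(I n)))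
      atTop (𝓝 0) := by
    simpa using tendsto_finsetSum K fun t _ => (tendsto_const_nhds (x := (1 : ℝ))).sub (hI.2 t)
  exact squeeze_zero (fun n => by positivity) hle hlim

lemma tendsto_sub_div_card (hI : IsFolner I) (K : Finset (Fin D → ℤ)) {C : ℝ} {u w : ℕ → ℝ}
    (h : ∀ n, |w n - u n| ≤ C * #((I n + K) \ I n)) :
    Tendsto (fun n => (w n - u n) / #(I n)) atTop (𝓝 0) := by
  have hC := (hI.tendsto_card_add_sdiff_div K).const_mul C
  rw [mul_zero] at hC
  refine squeeze_zero_norm (fun n => ?_) hC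
  rw [Real.norm_eq_abs, abs_div, abs_of_pos (hI.card_pos n), ← mul_div_assoc]
  exact div_le_div_of_nonneg_right (h n) (hI.card_pos n).le

lemma tendsto_sum_add_sub_sum_div (hI : IsFolner I) {g : (Fin D → ℤ) → ℝ} {M : ℝ}
    (hg : ∀ x, |g x| ≤ M) (t : Fin D → ℤ) :
    Tendsto (fun n => (∑ i ∈ I n, g (i + t) - ∑ i ∈ I n, g i) / #(I n)) atTop (𝓝 0) := by
  have hsum_le : ∀ s : Finset (Fin D → ℤ), |∑ x ∈ s, g x| ≤ #s * M := fun s =>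
    (abs_sum_le_sum_abs _ _).trans (by simpa using sum_le_card_nsmul s _ M fun x _ => hg x)
  refine hI.tendsto_sub_div_card {t} (C := 2 * M) fun n => ?_
  have hJ : I n + {t} = (I n).image (· + t) := by
    ext x
    simp only [Finset.mem_add, mem_singleton, mem_image, exists_eq_left]
  have hcard : #(I n \ (I n + {t})) = #((I n + {t}) \ I n) :=
    card_sdiff_comm (by rw [hJ, card_image_of_injective _ (add_left_injective t)])
  rw [← sum_image (g := (· + t)) (add_left_injective t).injOn, ← hJ,
    ← sum_sdiff_sub_sum_sdiff]
  calc _ ≤ |∑ x ∈ (I n + {t}) \ I n, g x| + |∑ x ∈ I n \ (I n + {t}), g x| := abs_sub _ _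
    _ ≤ _ := by
      have := hsum_le ((I n + {t}) \ I n)
      have := hsum_le (I n \ (I n + {t}))
      rw [hcard] at this
      linarith

end IsFolner

noncomputable def cube (D N : ℕ) : Finset (Fin D → ℤ) := Icc (fun _ => -N) (fun _ => N)

lemma mem_cube {N : ℕ} {x : Fin D → ℤ} : x ∈ cube D N ↔ ∀ i, |x i| ≤ N := by
  simp only [cube, Finset.mem_Icc, Pi.le_def, abs_le, forall_and]

lemma zero_mem_cube (N : ℕ) : (0 : Fin D → ℤ) ∈ cube D N :=
  mem_cube.2 fun i => by simp

lemma cube_mono {M N : ℕ} (h : M ≤ N) : cube D M ⊆ cube D N := fun x hx =>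
  mem_cube.2 fun i => (mem_cube.1 hx i).trans (by exact_mod_cast h)

lemma card_cube (N : ℕ) : #(cube D N) = (2 * N + 1) ^ D := by
  simp only [cube, Pi.card_Icc, Int.card_Icc, prod_const, card_univ, Fintype.card_fin]
  congr 1
  omega

lemma exists_subset_cube (s : Finset (Fin D → ℤ)) : ∃ N : ℕ, s ⊆ cube D N :=
  ⟨s.sup fun x => univ.sup fun i => (x i).natAbs, fun x hx => mem_cube.2 fun i => by
    rw [Int.abs_eq_natAbs]
    exact_mod_cast (le_sup (f := fun i => (x i).natAbs) (mem_univ i)).trans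
      (le_sup (f := fun x => univ.sup fun i => (x i).natAbs) hx)⟩

lemma cube_sub_cube_subset (M N : ℕ) :
    (cube D M : Set (Fin D → ℤ)) - ↑(cube D N) ⊆ ↑(cube D (M + N)) := by
  rintro _ ⟨x, hx, y, hy, rfl⟩
  refine mem_cube.2 fun i => ?_
  have hxi := mem_cube.1 hx i
  have hyi := mem_cube.1 hy i
  push_cast
  exact (abs_sub (x i) (y i)).trans (by linarith)

lemma isFolner_cube : IsFolner fun n : ℕ => cube D n := by
  refine ⟨fun n => ⟨0, zero_mem_cube n⟩, fun x => ?_⟩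
  obtain ⟨k, hk⟩ := exists_subset_cube {x}
  rw [← tendsto_add_atTop_iff_nat k]
  have hsub : ∀ n : ℕ, cube D n ⊆ cube D ↑(n + k) ∩ (cube D ↑(n + k)).image (· + x) := by
    intro n y hy
    refine mem_inter.2 ⟨cube_mono (by omega) hy, mem_image.2 ⟨y - x, ?_, sub_add_cancel y x⟩⟩
    exact cube_sub_cube_subset n k ⟨y, hy, x, hk (mem_singleton_self x), rfl⟩
  have hodd : Tendsto (fun n : ℕ => 2 * n + 1) atTop atTop :=
    tendsto_atTop_mono (fun n => show n ≤ 2 * n + 1 by omega) tendsto_id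
  have hlow : Tendsto (fun n : ℕ => (((2 * n + 1 : ℕ) : ℝ) / ((2 * n + 1 : ℕ) + (2 * k : ℝ))) ^ D)
      atTop (𝓝 1) := by
    simpa using ((tendsto_natCast_div_add_atTop (2 * k : ℝ)).comp hodd).pow D
  refine tendsto_of_tendsto_of_tendsto_of_le_of_le hlow tendsto_const_nhds (fun n => ?_)
    (fun n => ?_)
  · dsimp only
    calc _ = (#(cube D n) : ℝ) / #(cube D ↑(n + k)) := by
          rw [card_cube, card_cube, div_pow]
          push_cast
          ring
      _ ≤ _ := div_le_div_of_nonneg_right (by exact_mod_cast card_le_card (hsub n)) (by positivity)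
  · dsimp only
    exact div_le_one_of_le₀ (by exact_mod_cast card_le_card inter_subset_left) (by positivity)

def wrap (N : ℕ) (x : Fin D → ℤ) : Fin D → ℤ := fun i => (x i + N) % (2 * N + 1) - N

lemma wrap_mem_cube (N : ℕ) (x : Fin D → ℤ) : wrap N x ∈ cube D N := by
  refine mem_cube.2 fun i => abs_le.2 ⟨?_, ?_⟩
  · have := Int.emod_nonneg (x i + N) (by omega : (2 * N + 1 : ℤ) ≠ 0)
    simp only [wrap]
    omega
  · have := Int.emod_lt_of_pos (x i + N) (by omega : (0 : ℤ) < 2 * N + 1)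
    simp only [wrap]
    omega

lemma wrap_of_mem_cube {N : ℕ} {x : Fin D → ℤ} (hx : x ∈ cube D N) : wrap N x = x := by
  funext i
  have := abs_le.1 (mem_cube.1 hx i)
  simp only [wrap]
  rw [Int.emod_eq_of_lt (by omega) (by omega)]
  ring

lemma wrap_wrap (N : ℕ) (x : Fin D → ℤ) : wrap N (wrap N x) = wrap N x :=
  wrap_of_mem_cube (wrap_mem_cube N x)

lemma wrap_wrap_add (N : ℕ) (x y : Fin D → ℤ) : wrap N (wrap N x + y) = wrap N (x + y) := by
  funext i
  simp only [wrap, Pi.add_apply]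
  rw [show (x i + N) % (2 * N + 1) - N + y i + N = (x i + N) % (2 * N + 1) + y i by ring,
    Int.emod_add_emod, add_right_comm]

lemma lt_abs_wrap_apply {N M : ℕ} {x : Fin D → ℤ} {i : Fin D} (h₁ : M < |x i|)
    (h₂ : |x i| + M < 2 * N + 1) : M < |wrap N x i| := by
  by_contra! h
  have hdvd : (2 * N + 1 : ℤ) ∣ x i - wrap N x i := ⟨(x i + N) / (2 * N + 1), by
    simp only [wrap]
    linarith [Int.emod_add_mul_ediv (x i + N) (2 * N + 1)]⟩
  have := Int.eq_zero_of_abs_lt_dvd hdvd ((abs_sub _ _).trans_lt (by linarith))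
  rw [sub_eq_zero.1 this] at h₁
  exact absurd h h₁.not_ge

lemma sum_cube_add {β : Type*} [AddCommMonoid β] {N : ℕ} {g : (Fin D → ℤ) → β}
    (hg : ∀ x, g (wrap N x) = g x) (x : Fin D → ℤ) :
    ∑ t ∈ cube D N, g (x + t) = ∑ t ∈ cube D N, g t :=
  sum_nbij' (fun t => wrap N (x + t)) (fun s => wrap N (s - x))
    (fun _ _ => wrap_mem_cube N _) (fun _ _ => wrap_mem_cube N _)
    (fun t ht => by
      rw [sub_eq_add_neg, wrap_wrap_add, add_neg_cancel_comm, wrap_of_mem_cube ht])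
    (fun s hs => by rw [add_comm, wrap_wrap_add, sub_add_cancel, wrap_of_mem_cube hs])
    (fun t _ => (hg _).symm)

lemma IsFolner.tendsto_avg_of_wrap {I : ℕ → Finset (Fin D → ℤ)} (hI : IsFolner I) {N : ℕ}
    {g : (Fin D → ℤ) → ℝ} {M : ℝ} (hgM : ∀ x, |g x| ≤ M) (hg : ∀ x, g (wrap N x) = g x) :
    Tendsto (fun n => (∑ i ∈ I n, g i) / #(I n)) atTop
      (𝓝 ((∑ t ∈ cube D N, g t) / #(cube D N))) := by
  have hE := tendsto_finsetSum (cube D N) fun t _ => hI.tendsto_sum_add_sub_sum_div hgM t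
  rw [sum_const_zero] at hE
  have hcube : (#(cube D N) : ℝ) ≠ 0 := by
    exact_mod_cast (Finset.card_pos.2 ⟨0, zero_mem_cube N⟩).ne'
  have key : ∀ n, (∑ i ∈ I n, g i) / #(I n) = (∑ t ∈ cube D N, g t) / #(cube D N) -
      (∑ t ∈ cube D N, (∑ i ∈ I n, g (i + t) - ∑ i ∈ I n, g i) / #(I n)) / #(cube D N) := by
    intro n
    have hswap : ∑ t ∈ cube D N, ∑ i ∈ I n, g (i + t) = #(I n) * ∑ t ∈ cube D N, g t := by
      rw [sum_comm, sum_congr rfl fun i _ => sum_cube_add hg i, sum_const, nsmul_eq_mul]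
    rw [← sum_div, sum_sub_distrib, hswap, sum_const, nsmul_eq_mul]
    field_simp [(hI.card_pos n).ne']
    ring
  simp_rw [key]
  simpa using tendsto_const_nhds.sub (hE.div_const _)

section LocalRule

variable {X A : Type*} [AddCommGroup X] {B : Finset X} {f : (B → A) → A} {φ : A → ℝ}

def PreservesVacuum (B : Finset X) (f : (B → A) → A) (φ : A → ℝ) : Prop :=
  ∀ p : B → A, (∀ b, φ (p b) = 0) → φ (f p) = 0

lemma induce_apply_congr {a c : X → A} {x : X} (h : ∀ b ∈ B, c (x + b) = a (x + b)) :
    induce B f c x = induce B f a x :=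
  congrArg f (funext fun b => h b b.2)

lemma PreservesVacuum.phi_induce_eq_zero (h : PreservesVacuum B f φ) {a : X → A} {x : X}
    (ha : ∀ b ∈ B, φ (a (x + b)) = 0) : φ (induce B f a x) = 0 :=
  h _ fun b => ha b b.2

lemma PreservesVacuum.support_induce_subset (h : PreservesVacuum B f φ) (a : X → A) :
    (Function.support fun x => φ (induce B f a x)) ⊆
      (Function.support fun x => φ (a x)) - (B : Set X) := by
  intro x hx
  by_contra hsub
  refine hx (h.phi_induce_eq_zero fun b hb => ?_)
  by_contra hab
  exact hsub ⟨x + b, hab, b, hb, add_sub_cancel_right x b⟩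

lemma conserved.preservesVacuum (hcons : conserved B f φ) (hpos : ∀ a, 0 ≤ φ a) :
    PreservesVacuum B f φ := by
  classical
  intro p hp
  obtain ⟨q, hq⟩ := hcons.1
  let a : X → A := fun x => if h : x ∈ B then p ⟨x, h⟩ else q
  have ha : ∀ x, φ (a x) = 0 := fun x => by
    simp only [a]
    split_ifs
    exacts [hp _, hq]
  have hfin : (Function.support fun x => φ (a x)).Finite := by simp [ha]
  have hsum := hcons.2.2 a hfin
  simp only [ha, finsum_zero] at hsum
  have hle := single_le_finsum 0 (hcons.2.1 a hfin) fun _ => hpos _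
  have h0 : induce B f a 0 = f p := congrArg f (funext fun b => by simp [a, b.2])
  linarith [hpos (f p), h0 ▸ hle]

lemma conserved.abs_sum_induce_sub_sum_le [DecidableEq X] (hcons : conserved B f φ)
    (hpos : ∀ a, 0 ≤ φ a) {M : ℝ} (hM : ∀ a, φ a ≤ M) (hB0 : 0 ∈ B) (a : X → A)
    (I : Finset X) :
    |∑ x ∈ I, φ (induce B f a x) - ∑ x ∈ I, φ (a x)| ≤ M * #((I + (B - B)) \ I) := by
  obtain ⟨q, hq⟩ := hcons.1
  set S := I + B
  set K := I + (B - B)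
  set a' := S.piecewise a fun _ => q
  have hIS : I ⊆ S := fun x hx => by simpa using add_mem_add hx hB0
  have hKS : K = S - B := (add_sub_assoc I B B).symm
  have hSK : S ⊆ K := fun x hx => by simpa [hKS] using sub_mem_sub hx hB0
  have hsupp : (Function.support fun x => φ (a' x)) ⊆ S :=
    Function.support_subset_iff'.2 fun x hx => by simp [a', piecewise_eq_of_notMem _ _ _ hx, hq]
  have hsupp' : (Function.support fun x => φ (induce B f a' x)) ⊆ K := by
    refine ((hcons.preservesVacuum hpos).support_induce_subset a').trans ?_
    rw [hKS, coe_sub]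
    exact Set.sub_subset_sub hsupp subset_rfl
  have hsum := hcons.2.2 a' ((S.finite_toSet).subset hsupp)
  rw [finsum_eq_sum_of_support_subset _ hsupp', finsum_eq_sum_of_support_subset _ hsupp,
    ← sum_sdiff (hIS.trans hSK), ← sum_sdiff hIS] at hsum
  have hFI : ∑ x ∈ I, φ (induce B f a' x) = ∑ x ∈ I, φ (induce B f a x) :=
    sum_congr rfl fun x hx => by
      rw [induce_apply_congr fun b hb => piecewise_eq_of_mem _ _ _ (add_mem_add hx hb)]
  have haI : ∑ x ∈ I, φ (a' x) = ∑ x ∈ I, φ (a x) :=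
    sum_congr rfl fun x hx => congrArg φ (piecewise_eq_of_mem _ _ _ (hIS hx))
  have hbound : ∀ g : X → A, ∑ x ∈ K \ I, φ (g x) ≤ M * #(K \ I) := fun g => by
    simpa [mul_comm] using sum_le_card_nsmul (K \ I) _ M fun x _ => hM (g x)
  have hSI : ∑ x ∈ S \ I, φ (a' x) ≤ ∑ x ∈ K \ I, φ (a' x) :=
    sum_le_sum_of_subset_of_nonneg (sdiff_subset_sdiff hSK le_rfl) fun _ _ _ => hpos _
  have h₁ := sum_nonneg fun x (_ : x ∈ K \ I) => hpos (induce B f a' x)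
  have h₂ := sum_nonneg fun x (_ : x ∈ S \ I) => hpos (a' x)
  rw [abs_le]
  constructor <;> linarith [hbound a', hbound (induce B f a')]

end LocalRule

lemma conserved.stationaryAvg_induce {A : Type*} [Finite A] {B : Finset (Fin D → ℤ)}
    {f : (B → A) → A} {φ : A → ℝ} (hcons : conserved B f φ) (hpos : ∀ a, 0 ≤ φ a)
    (hB0 : 0 ∈ B) {a : (Fin D → ℤ) → A} {r : ℝ} (ha : StationaryAvg φ a r) :
    StationaryAvg φ (induce B f a) r := by
  classical
  obtain ⟨M, hM⟩ := (Set.finite_range φ).bddAbove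
  intro I hI
  have h := hI.tendsto_sub_div_card (B - B) fun n =>
    hcons.abs_sum_induce_sub_sum_le hpos (fun a => hM ⟨a, rfl⟩) hB0 a (I n)
  simpa [sub_div] using (ha I hI).add h

section Periodization

variable {A : Type*} {B : Finset (Fin D → ℤ)} {f : (B → A) → A} {φ : A → ℝ}

def PreservesStationaryAvg (B : Finset (Fin D → ℤ)) (f : (B → A) → A) (φ : A → ℝ) : Prop :=
  ∀ (a : (Fin D → ℤ) → A) (r : ℝ), StationaryAvg φ a r → StationaryAvg φ (induce B f a) r

lemma induce_wrap {N : ℕ} {c : (Fin D → ℤ) → A} (hc : ∀ x, c (wrap N x) = c x)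
    (x : Fin D → ℤ) : induce B f c (wrap N x) = induce B f c x :=
  congrArg f (funext fun b => by rw [← hc (wrap N x + b), wrap_wrap_add, hc])

lemma stationaryAvg_of_wrap [Finite A] {N : ℕ} {c : (Fin D → ℤ) → A}
    (hc : ∀ x, c (wrap N x) = c x) :
    StationaryAvg φ c ((∑ t ∈ cube D N, φ (c t)) / #(cube D N)) := by
  obtain ⟨M, hM⟩ := (Set.finite_range fun a => |φ a|).bddAbove
  exact fun I hI => hI.tendsto_avg_of_wrap (fun x => hM ⟨c x, rfl⟩) fun x => by rw [hc]

lemma PreservesStationaryAvg.sum_cube_induce_eq [Finite A] (h : PreservesStationaryAvg B f φ)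
    {N : ℕ} {c : (Fin D → ℤ) → A} (hc : ∀ x, c (wrap N x) = c x) :
    ∑ t ∈ cube D N, φ (induce B f c t) = ∑ t ∈ cube D N, φ (c t) := by
  have hc' := h c _ (stationaryAvg_of_wrap hc) _ isFolner_cube
  have hFc := stationaryAvg_of_wrap (φ := φ) (induce_wrap (f := f) hc) _ isFolner_cube
  have hcube : (#(cube D N) : ℝ) ≠ 0 := by
    exact_mod_cast (Finset.card_pos.2 ⟨0, zero_mem_cube N⟩).ne'
  exact (div_left_inj' hcube).1 (tendsto_nhds_unique hFc hc')

lemma PreservesStationaryAvg.preservesVacuum [Finite A] (h : PreservesStationaryAvg B f φ)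
    (hpos : ∀ a, 0 ≤ φ a) (hvac : ∃ a, φ a = 0) : PreservesVacuum B f φ := by
  classical
  intro p hp
  obtain ⟨q, hq⟩ := hvac
  obtain ⟨N, hN⟩ := exists_subset_cube B
  let a : (Fin D → ℤ) → A := fun x => if h : x ∈ B then p ⟨x, h⟩ else q
  let c : (Fin D → ℤ) → A := fun x => a (wrap N x)
  have hc : ∀ x, φ (c x) = 0 := fun x => by
    simp only [c, a]
    split_ifs
    exacts [hp _, hq]
  have hsum := h.sum_cube_induce_eq (N := N) (c := c) fun x => by simp only [c, wrap_wrap]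
  simp only [hc, sum_const_zero] at hsum
  have h0 := (sum_eq_zero_iff_of_nonneg fun _ _ => hpos _).1 hsum 0 (zero_mem_cube N)
  have hc0 : induce B f c 0 = f p :=
    congrArg f (funext fun b => by simp [c, a, wrap_of_mem_cube (hN b.2), b.2])
  rwa [hc0] at h0

/-- Deep inside `cube D N` both configurations agree on the neighbourhood `x + B`; near the
boundary both neighbourhoods are vacuum, since the support of `a` and of its periodic copies stays
`2 * NB` away from it. -/
lemma PreservesVacuum.phi_induce_comp_wrap (hvac : PreservesVacuum B f φ) {a : (Fin D → ℤ) → A}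
    {N₀ NB N : ℕ} (hB : B ⊆ cube D NB) (ha : (Function.support fun x => φ (a x)) ⊆ cube D N₀)
    (hN : N₀ + 2 * NB ≤ N) {x : Fin D → ℤ} (hx : x ∈ cube D N) :
    φ (induce B f (fun y => a (wrap N y)) x) = φ (induce B f a x) := by
  have hvac_of_far : ∀ y i, (N₀ : ℤ) < |y i| → φ (a y) = 0 := fun y i hy => by
    by_contra hne
    exact hy.not_ge (mem_cube.1 (ha hne) i)
  by_cases hdeep : x ∈ cube D (N - NB)
  · refine congrArg φ (induce_apply_congr fun b hb => congrArg a (wrap_of_mem_cube ?_))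
    simpa [Nat.sub_add_cancel (by omega : NB ≤ N)] using
      cube_sub_cube_subset (N - NB) NB ⟨x, hdeep, -b, by simpa [mem_cube] using hB hb, by simp⟩
  · obtain ⟨i, hi⟩ : ∃ i, ((N - NB : ℕ) : ℤ) < |x i| := by
      simpa [mem_cube] using hdeep
    have hfar : ∀ b ∈ B, (N₀ : ℤ) < |(x + b) i| ∧ |(x + b) i| + N₀ < 2 * N + 1 := by
      intro b hb
      have hbi := mem_cube.1 (hB hb) i
      have hxi := mem_cube.1 hx i
      have := abs_add_le (x i) (b i)
      have := abs_sub_abs_le_abs_sub (x i) (-b i)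
      simp only [Pi.add_apply, abs_neg, sub_neg_eq_add] at *
      push_cast [Nat.cast_sub (by omega : NB ≤ N)] at hi
      constructor <;> linarith
    rw [hvac.phi_induce_eq_zero (a := fun y => a (wrap N y)) fun b hb =>
        hvac_of_far _ i (lt_abs_wrap_apply (hfar b hb).1 (hfar b hb).2),
      hvac.phi_induce_eq_zero (a := a) fun b hb => hvac_of_far _ i (hfar b hb).1]

lemma PreservesStationaryAvg.finsum_induce_eq [Finite A] (h : PreservesStationaryAvg B f φ)
    (hvac : PreservesVacuum B f φ) {a : (Fin D → ℤ) → A}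
    (ha : (Function.support fun x => φ (a x)).Finite) :
    ∑ᶠ x, φ (induce B f a x) = ∑ᶠ x, φ (a x) := by
  obtain ⟨N₀, hN₀⟩ := exists_subset_cube ha.toFinset
  obtain ⟨NB, hNB⟩ := exists_subset_cube B
  set N := N₀ + 2 * NB
  have hsupp : (Function.support fun x => φ (a x)) ⊆ cube D N₀ := fun x hx =>
    hN₀ (ha.mem_toFinset.2 hx)
  have hsuppF : (Function.support fun x => φ (induce B f a x)) ⊆ cube D N :=
    (hvac.support_induce_subset a).trans <|
      (Set.sub_subset_sub hsupp (coe_subset.2 hNB)).trans <|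
      (cube_sub_cube_subset N₀ NB).trans (coe_subset.2 (cube_mono (by omega)))
  calc ∑ᶠ x, φ (induce B f a x)
      = ∑ t ∈ cube D N, φ (induce B f a t) := finsum_eq_sum_of_support_subset _ hsuppF
    _ = ∑ t ∈ cube D N, φ (induce B f (fun y => a (wrap N y)) t) :=
        sum_congr rfl fun t ht => (hvac.phi_induce_comp_wrap hNB hsupp le_rfl ht).symm
    _ = ∑ t ∈ cube D N, φ (a (wrap N t)) :=
        h.sum_cube_induce_eq fun x => by simp only [wrap_wrap]
    _ = ∑ t ∈ cube D N, φ (a t) := sum_congr rfl fun t ht => by rw [wrap_of_mem_cube ht]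
    _ = ∑ᶠ x, φ (a x) := (finsum_eq_sum_of_support_subset _
        (hsupp.trans (coe_subset.2 (cube_mono (by omega))))).symm

lemma PreservesStationaryAvg.conserved [Finite A] (h : PreservesStationaryAvg B f φ)
    (hpos : ∀ a, 0 ≤ φ a) (hvac : ∃ a, φ a = 0) : conserved B f φ :=
  have hv := h.preservesVacuum hpos hvac
  ⟨hvac, fun a ha => (ha.sub B.finite_toSet).subset (hv.support_induce_subset a),
    fun _ ha => h.finsum_induce_eq hv ha⟩

end Periodization

end

theorem stmt6_general {A : Type*} [Fintype A] {D : ℕ}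
    (B : Finset (Fin D → ℤ)) (hB0 : (0 : Fin D → ℤ) ∈ B)
    (f : (B → A) → A) (φ : A → ℝ)
    (hpos : ∀ a : A, 0 ≤ φ a) (hvac : ∃ a : A, φ a = 0) :
    conserved B f φ ↔
      ∀ (a : (Fin D → ℤ) → A) (r : ℝ),
        StationaryAvg φ a r → StationaryAvg φ (induce B f a) r :=
  ⟨fun h _ _ => h.stationaryAvg_induce hpos hB0,
    fun h => PreservesStationaryAvg.conserved h hpos hvac⟩

theorem stmt6 {A : Type*} [Fintype A] [Nonempty A] {D : ℕ} (hD : 1 ≤ D)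
    (B : Finset (Fin D → ℤ)) (hB0 : (0 : Fin D → ℤ) ∈ B)
    (hBsym : ∀ b : Fin D → ℤ, b ∈ B ↔ -b ∈ B)
    (f : (B → A) → A) (φ : A → ℝ)
    (hpos : ∀ a : A, 0 ≤ φ a) (hvac : ∃ a : A, φ a = 0) :
    conserved B f φ ↔
      ∀ (a : (Fin D → ℤ) → A) (r : ℝ),
        StationaryAvg φ a r → StationaryAvg φ (induce B f a) r :=
  stmt6_general B hB0 f φ hpos hvac
end

section
/- Let K be a subgroup of X of finite index, let π : X → X̃ := X/K be the quotient map, and assume π is injective on B² = B + B. Let F̃ : (X̃ → A) → (X̃ → A) be the induced cellular automaton, F̃(ã)(x̃) = f(b ↦ ã(x̃ + π(b))). Call a function μ : (X̃ → A) → ℝ shift-invariant if μ(ã ∘ (· + x̃)) = μ(ã) for all ã : X̃ → A and x̃ ∈ X̃. Assume φ⁻¹({0}) ≠ ∅ and that f is vacuum-preserving. Then φ is conserved by F if and only if for every shift-invariant μ : (X̃ → A) → ℝ one has ∑_{ã : X̃ → A} μ(ã) · (φ(F̃(ã)(0̃)) − φ(ã(0̃))) = 0, where 0̃ is the identity of X̃.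 -/
open scoped Pointwise

/-!
Let `localChange w = φ (f w) - φ (w 0)` be the change of `φ` at the centre of a window `w`.
For finitely supported `a`, conservation says that the total change of `a` over `X` vanishes.
Testing the μ-condition against the counting measures of translation orbits shows that it says the
same for every configuration on `X ⧸ K`. Changing one cell `p` only alters the windows at `p - B`,
whose cells lie in `p + (B + B)`; the quotient map is injective there, so these windows can be
copied faithfully between `X` and `X ⧸ K`, and a one-cell change alters both totals by the same
amount. Every configuration is reached from a vacuum one by finitely many one-cell changes, and
vacuum configurations have total change zero, so the two totals vanish together.
-/

open Function

namespace CellularAutomaton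

lemma eq_of_forall_update_eq {ι β γ : Type*} [DecidableEq ι] {P : (ι → β) → Prop}
    {Φ : (ι → β) → γ} (hP : ∀ u i b, P u → P (update u i b))
    (hΦ : ∀ u i b, P u → Φ (update u i b) = Φ u) (s : Finset ι) {u v : ι → β} (hu : P u)
    (huv : ∀ i ∉ s, u i = v i) : Φ u = Φ v := by
  induction s using Finset.induction_on generalizing u with
  | empty => rw [funext fun i => huv i (Finset.notMem_empty i)]
  | insert a s _ ih =>
    rw [← hΦ u a (v a) hu]
    refine ih (hP u a (v a) hu) fun i hi => ?_
    by_cases hia : i = a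
    · rw [hia, update_self]
    · rw [update_of_ne hia]
      exact huv i (by simp [hia, hi])

lemma finite_support_update {ι α M : Type*} [DecidableEq ι] [Zero M] {φ : α → M} {a : ι → α}
    (ha : (support fun x => φ (a x)).Finite) (p : ι) (v : α) :
    (support fun x => φ (update a p v x)).Finite := by
  refine (ha.insert p).subset fun x hx => ?_
  by_cases hxp : x = p
  · exact hxp ▸ Set.mem_insert x _
  · exact Set.mem_insert_of_mem p (by simpa [update_of_ne hxp] using hx)

lemma finsum_eq_sum_of_support_subset_image {α β M : Type*} [AddCommMonoid M] (F : β → M)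
    (s : Finset α) {e : α → β} (he : Set.InjOn e s) (h : support F ⊆ e '' s) :
    ∑ᶠ y, F y = ∑ a ∈ s, F (e a) := by
  classical
  rw [finsum_eq_finsetSum_of_support_subset F (s := s.image e) (by simpa using h),
    Finset.sum_image he]

lemma injOn_map_sub {G H : Type*} [AddCommGroup G] [AddCommGroup H] {ψ : G →+ H} {s : Set G}
    (hψ : Set.InjOn ψ s) (p : G) : Set.InjOn (fun b => ψ (p - b)) s :=
  fun b hb b' hb' h => hψ hb hb' (by simpa using h)

variable {X Y A : Type*} [AddCommGroup X] [AddCommGroup Y]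

-- `π = AddMonoidHom.id X` gives the automaton on `X`, the quotient map the one on `X ⧸ K`.
def window (π : X →+ Y) (B : Finset X) (c : Y → A) (y : Y) : B → A :=
  fun b => c (y + π b)

def localChange {B : Finset X} (f : (B → A) → A) (φ : A → ℝ) (h0 : (0 : X) ∈ B)
    (w : B → A) : ℝ :=
  φ (f w) - φ (w ⟨0, h0⟩)

noncomputable def totalChange (π : X →+ Y) {B : Finset X} (f : (B → A) → A) (φ : A → ℝ)
    (h0 : (0 : X) ∈ B) (c : Y → A) : ℝ :=
  ∑ᶠ y, localChange f φ h0 (window π B c y)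

section Vacuum

variable {B : Finset X} {f : (B → A) → A} {φ : A → ℝ}

lemma localChange_eq_zero (h0 : (0 : X) ∈ B) (hf : ∀ w, (∀ b, φ (w b) = 0) → φ (f w) = 0)
    {w : B → A} (hw : ∀ b, φ (w b) = 0) : localChange f φ h0 w = 0 := by
  rw [localChange, hf w hw, hw, sub_self]

lemma totalChange_eq_zero (π : X →+ Y) (h0 : (0 : X) ∈ B)
    (hf : ∀ w, (∀ b, φ (w b) = 0) → φ (f w) = 0) {c : Y → A} (hc : ∀ y, φ (c y) = 0) :
    totalChange π f φ h0 c = 0 :=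
  finsum_eq_zero_of_forall_eq_zero fun _ => localChange_eq_zero h0 hf fun _ => hc _

lemma finite_support_window {F : (B → A) → ℝ} (hF : ∀ w, (∀ b, φ (w b) = 0) → F w = 0)
    {a : X → A} (ha : (support fun x => φ (a x)).Finite) :
    (support fun x => F (window (AddMonoidHom.id X) B a x)).Finite := by
  refine (B.finite_toSet.biUnion fun b _ =>
    ha.preimage (f := (· + b)) (add_left_injective b).injOn).subset fun x hx => ?_
  by_contra hx'
  simp only [Set.mem_iUnion, Set.mem_preimage, mem_support, not_exists, not_not] at hx'
  exact hx (hF _ fun b => hx' b b.2)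

lemma totalChange_id_eq_sub (h0 : (0 : X) ∈ B) (hf : ∀ w, (∀ b, φ (w b) = 0) → φ (f w) = 0)
    {a : X → A} (ha : (support fun x => φ (a x)).Finite) :
    totalChange (AddMonoidHom.id X) f φ h0 a = ∑ᶠ x, φ (induce B f a x) - ∑ᶠ x, φ (a x) := by
  have hfa : (support fun x => φ (induce B f a x)).Finite := finite_support_window hf ha
  rw [← finsum_sub_distrib hfa ha]
  refine finsum_congr fun x => ?_
  simp only [localChange, window, AddMonoidHom.id_apply, add_zero]
  rfl

lemma conserved_iff_forall_totalChange_eq_zero (h0 : (0 : X) ∈ B)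
    (hvac : ∃ a, φ a = 0) (hf : ∀ w, (∀ b, φ (w b) = 0) → φ (f w) = 0) :
    conserved B f φ ↔ ∀ a : X → A, (support fun x => φ (a x)).Finite →
      totalChange (AddMonoidHom.id X) f φ h0 a = 0 := by
  simp only [conserved, hvac, true_and]
  constructor
  · rintro ⟨-, hsum⟩ a ha
    rw [totalChange_id_eq_sub h0 hf ha, hsum a ha, sub_self]
  · intro h
    refine ⟨fun a ha => finite_support_window hf ha, fun a ha => ?_⟩
    rw [← sub_eq_zero, ← totalChange_id_eq_sub h0 hf ha, h a ha]

end Vacuum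

section Exchange

variable {B : Finset X}

lemma support_sub_window_subset {Z : Type*} [AddCommGroup Z] (ψ : X →+ Z) (F : (B → A) → ℝ)
    (p : X) {c₁ c₂ : Z → A} (hc : ∀ z ≠ ψ p, c₁ z = c₂ z) :
    support (fun z => F (window ψ B c₁ z) - F (window ψ B c₂ z)) ⊆
      (fun b => ψ (p - b)) '' B := by
  intro z hz
  by_contra hzB
  refine hz (sub_eq_zero.2 (congrArg F (funext fun b => hc _ fun hb => hzB ⟨b, b.2, ?_⟩)))
  simp only [map_sub, ← hb, add_sub_cancel_right]

lemma window_map_sub_eq (hBsym : ∀ b : X, b ∈ B ↔ -b ∈ B) (π : X →+ Y) {p : X} {u : X → A}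
    {c : Y → A} (hm : ∀ z ∈ (B : Set X) + B, c (π (p + z)) = u (p + z)) {b : X} (hb : b ∈ B) :
    window π B c (π (p - b)) = window (AddMonoidHom.id X) B u (p - b) := by
  funext b'
  have hz : -b + b' ∈ (B : Set X) + B := Set.add_mem_add ((hBsym b).1 hb) b'.2
  have hpz : p - b + b' = p + (-b + b') := by abel
  simp only [window, AddMonoidHom.id_apply, ← map_add, hpz, hm _ hz]

lemma finsum_sub_window_eq (h0 : (0 : X) ∈ B) (hBsym : ∀ b : X, b ∈ B ↔ -b ∈ B)
    {π : X →+ Y} (hinj : Set.InjOn π ((B : Set X) + B)) (F : (B → A) → ℝ) {p : X}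
    {u₁ u₂ : X → A} {c₁ c₂ : Y → A} (hu : ∀ x ≠ p, u₁ x = u₂ x) (hc : ∀ y ≠ π p, c₁ y = c₂ y)
    (hm₁ : ∀ z ∈ (B : Set X) + B, c₁ (π (p + z)) = u₁ (p + z))
    (hm₂ : ∀ z ∈ (B : Set X) + B, c₂ (π (p + z)) = u₂ (p + z)) :
    ∑ᶠ x, (F (window (AddMonoidHom.id X) B u₁ x) - F (window (AddMonoidHom.id X) B u₂ x)) =
      ∑ᶠ y, (F (window π B c₁ y) - F (window π B c₂ y)) := by
  have hinjB : Set.InjOn π B := hinj.mono fun b hb => by simpa using Set.add_mem_add hb h0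
  rw [finsum_eq_sum_of_support_subset_image _ B (injOn_map_sub injective_id.injOn p)
      (support_sub_window_subset _ F p hu),
    finsum_eq_sum_of_support_subset_image _ B (injOn_map_sub hinjB p)
      (support_sub_window_subset π F p hc)]
  refine Finset.sum_congr rfl fun b hb => ?_
  rw [window_map_sub_eq hBsym π hm₁ hb, window_map_sub_eq hBsym π hm₂ hb]
  rfl

lemma totalChange_sub_eq [Finite Y] (h0 : (0 : X) ∈ B) (hBsym : ∀ b : X, b ∈ B ↔ -b ∈ B)
    {π : X →+ Y} (hinj : Set.InjOn π ((B : Set X) + B)) {f : (B → A) → A} {φ : A → ℝ}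
    (hf : ∀ w, (∀ b, φ (w b) = 0) → φ (f w) = 0) {p : X} {u₁ u₂ : X → A} {c₁ c₂ : Y → A}
    (hu₁ : (support fun x => φ (u₁ x)).Finite) (hu₂ : (support fun x => φ (u₂ x)).Finite)
    (hu : ∀ x ≠ p, u₁ x = u₂ x) (hc : ∀ y ≠ π p, c₁ y = c₂ y)
    (hm₁ : ∀ z ∈ (B : Set X) + B, c₁ (π (p + z)) = u₁ (p + z))
    (hm₂ : ∀ z ∈ (B : Set X) + B, c₂ (π (p + z)) = u₂ (p + z)) :
    totalChange (AddMonoidHom.id X) f φ h0 u₁ - totalChange (AddMonoidHom.id X) f φ h0 u₂ =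
      totalChange π f φ h0 c₁ - totalChange π f φ h0 c₂ := by
  have hloc : ∀ w : B → A, (∀ b, φ (w b) = 0) → localChange f φ h0 w = 0 :=
    fun _ => localChange_eq_zero h0 hf
  unfold totalChange
  rw [← finsum_sub_distrib (finite_support_window hloc hu₁) (finite_support_window hloc hu₂),
    ← finsum_sub_distrib (Set.toFinite _) (Set.toFinite _)]
  exact finsum_sub_window_eq h0 hBsym hinj _ hu hc hm₁ hm₂

lemma exists_codomain_patches {π : X →+ Y} (hinj : Set.InjOn π ((B : Set X) + B)) {p : X}
    {u₁ u₂ : X → A} (hu : ∀ x ≠ p, u₁ x = u₂ x) :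
    ∃ c₁ c₂ : Y → A, (∀ y ≠ π p, c₁ y = c₂ y) ∧
      (∀ z ∈ (B : Set X) + B, c₁ (π (p + z)) = u₁ (p + z)) ∧
      (∀ z ∈ (B : Set X) + B, c₂ (π (p + z)) = u₂ (p + z)) := by
  let e : ((B : Set X) + (B : Set X) : Set X) → Y := fun z => π (p + z)
  have he : Injective e := fun z z' h => Subtype.ext (hinj z.2 z'.2 (by simpa [e] using h))
  refine ⟨extend e (fun z => u₁ (p + z)) fun _ => u₁ p,
    extend e (fun z => u₂ (p + z)) fun _ => u₁ p, fun y hy => ?_,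
    fun z hz => he.extend_apply _ _ ⟨z, hz⟩, fun z hz => he.extend_apply _ _ ⟨z, hz⟩⟩
  by_cases hye : ∃ z, e z = y
  · obtain ⟨z, rfl⟩ := hye
    rw [he.extend_apply, he.extend_apply]
    exact hu _ fun hz => hy (congrArg π hz)
  · rw [extend_apply' _ _ _ hye, extend_apply' _ _ _ hye]

lemma exists_domain_patches (h0 : (0 : X) ∈ B) {π : X →+ Y}
    (hinj : Set.InjOn π ((B : Set X) + B)) {φ : A → ℝ} {v : A} (hv : φ v = 0) {p : X}
    {c₁ c₂ : Y → A} (hc : ∀ y ≠ π p, c₁ y = c₂ y) :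
    ∃ u₁ u₂ : X → A, (support fun x => φ (u₁ x)).Finite ∧ (support fun x => φ (u₂ x)).Finite ∧
      (∀ x ≠ p, u₁ x = u₂ x) ∧
      (∀ z ∈ (B : Set X) + B, c₁ (π (p + z)) = u₁ (p + z)) ∧
      (∀ z ∈ (B : Set X) + B, c₂ (π (p + z)) = u₂ (p + z)) := by
  classical
  let N : Set X := (p + ·) '' ((B : Set X) + B)
  have hN : N.Finite := (B.finite_toSet.add B.finite_toSet).image _
  have hfin : ∀ c : Y → A, (support fun x => φ (N.piecewise (c ∘ π) (fun _ => v) x)).Finite :=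
    fun c => hN.subset fun x hx => by
      by_contra hxN
      exact hx (by simp only [Set.piecewise_eq_of_notMem _ _ _ hxN, hv])
  have hmatch : ∀ c : Y → A, ∀ z ∈ (B : Set X) + B,
      c (π (p + z)) = N.piecewise (c ∘ π) (fun _ => v) (p + z) :=
    fun c z hz => (Set.piecewise_eq_of_mem N (c ∘ π) _ (Set.mem_image_of_mem _ hz)).symm
  refine ⟨_, _, hfin c₁, hfin c₂, fun x hx => ?_, hmatch c₁, hmatch c₂⟩
  by_cases hxN : x ∈ N
  · obtain ⟨z, hz, rfl⟩ := hxN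
    have h00 : (0 : X) ∈ (B : Set X) + B := by simpa using Set.add_mem_add h0 h0
    rw [Set.piecewise_eq_of_mem _ _ _ (Set.mem_image_of_mem _ hz),
      Set.piecewise_eq_of_mem _ _ _ (Set.mem_image_of_mem _ hz)]
    refine hc _ fun hπz => hx ?_
    simp only [hinj hz h00 (by simpa using hπz), add_zero]
  · rw [Set.piecewise_eq_of_notMem _ _ _ hxN, Set.piecewise_eq_of_notMem _ _ _ hxN]

end Exchange

section Transfer

variable [Finite Y] {B : Finset X} {f : (B → A) → A} {φ : A → ℝ} {π : X →+ Y}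

lemma totalChange_id_update [DecidableEq X] (h0 : (0 : X) ∈ B)
    (hBsym : ∀ b : X, b ∈ B ↔ -b ∈ B) (hinj : Set.InjOn π ((B : Set X) + B))
    (hf : ∀ w, (∀ b, φ (w b) = 0) → φ (f w) = 0) (hT : ∀ c : Y → A, totalChange π f φ h0 c = 0)
    {u : X → A} (hu : (support fun x => φ (u x)).Finite) (p : X) (a : A) :
    totalChange (AddMonoidHom.id X) f φ h0 (update u p a) =
      totalChange (AddMonoidHom.id X) f φ h0 u := by
  have hupd : ∀ x ≠ p, update u p a x = u x := fun x hx => update_of_ne hx _ _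
  obtain ⟨c₁, c₂, hc, hm₁, hm₂⟩ := exists_codomain_patches hinj hupd
  have := totalChange_sub_eq h0 hBsym hinj hf (finite_support_update hu p a) hu hupd hc hm₁ hm₂
  rwa [hT, hT, sub_self, sub_eq_zero] at this

lemma totalChange_update [DecidableEq Y] (h0 : (0 : X) ∈ B)
    (hBsym : ∀ b : X, b ∈ B ↔ -b ∈ B) (hinj : Set.InjOn π ((B : Set X) + B))
    (hπ : Surjective π) (hf : ∀ w, (∀ b, φ (w b) = 0) → φ (f w) = 0) {v : A} (hv : φ v = 0)
    (hD : ∀ u : X → A, (support fun x => φ (u x)).Finite →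
      totalChange (AddMonoidHom.id X) f φ h0 u = 0)
    (c : Y → A) (q : Y) (a : A) :
    totalChange π f φ h0 (update c q a) = totalChange π f φ h0 c := by
  obtain ⟨p, rfl⟩ := hπ q
  have hupd : ∀ y ≠ π p, update c (π p) a y = c y := fun y hy => update_of_ne hy _ _
  obtain ⟨u₁, u₂, hu₁, hu₂, hu, hm₁, hm₂⟩ := exists_domain_patches h0 hinj hv hupd
  have := totalChange_sub_eq h0 hBsym hinj hf hu₁ hu₂ hu hupd hm₁ hm₂
  rwa [hD _ hu₁, hD _ hu₂, sub_self, eq_comm, sub_eq_zero] at this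

lemma forall_totalChange_id_eq_zero_iff (h0 : (0 : X) ∈ B)
    (hBsym : ∀ b : X, b ∈ B ↔ -b ∈ B) (hinj : Set.InjOn π ((B : Set X) + B))
    (hπ : Surjective π) (hvac : ∃ v, φ v = 0) (hf : ∀ w, (∀ b, φ (w b) = 0) → φ (f w) = 0) :
    (∀ a : X → A, (support fun x => φ (a x)).Finite →
      totalChange (AddMonoidHom.id X) f φ h0 a = 0) ↔
      ∀ c : Y → A, totalChange π f φ h0 c = 0 := by
  classical
  obtain ⟨v, hv⟩ := hvac
  constructor
  · intro hD c
    have := Fintype.ofFinite Y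
    rw [eq_of_forall_update_eq (P := fun _ => True) (fun _ _ _ _ => trivial)
      (fun c q a _ => totalChange_update h0 hBsym hinj hπ hf hv hD c q a) Finset.univ trivial
      (v := fun _ => v) fun y hy => absurd (Finset.mem_univ y) hy]
    exact totalChange_eq_zero π h0 hf fun _ => hv
  · intro hT a ha
    let s := ha.toFinset
    rw [eq_of_forall_update_eq (P := fun u => (support fun x => φ (u x)).Finite)
      (fun u p b hu => finite_support_update hu p b)
      (fun u p b hu => totalChange_id_update h0 hBsym hinj hf hT hu p b) s ha
      (v := s.piecewise (fun _ => v) a) fun x hx => (s.piecewise_eq_of_notMem _ _ hx).symm]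
    refine totalChange_eq_zero _ h0 hf fun x => ?_
    by_cases hx : x ∈ s
    · rwa [s.piecewise_eq_of_mem _ _ hx]
    · rw [s.piecewise_eq_of_notMem _ _ hx]
      simpa [s] using hx

end Transfer

lemma totalChange_eq_finsum_shift {B : Finset X} (π : X →+ Y) (f : (B → A) → A) (φ : A → ℝ)
    (h0 : (0 : X) ∈ B) (c : Y → A) :
    totalChange π f φ h0 c =
      ∑ᶠ x, (φ (f fun b => c ((0 : Y) + π b + x)) - φ (c ((0 : Y) + x))) := by
  refine finsum_congr fun x => ?_
  change φ (f fun b => c (x + π b)) - φ (c (x + π 0)) = _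
  simp only [map_zero, zero_add, add_comm x]

theorem forall_shiftInvariant_finsum_mul_eq_zero_iff {G A : Type*} [AddCommGroup G] [Finite G]
    [Finite A] (Δ : (G → A) → ℝ) :
    (∀ μ : (G → A) → ℝ, (∀ c x, μ (fun y => c (y + x)) = μ c) → ∑ᶠ c, μ c * Δ c = 0) ↔
      ∀ c : G → A, ∑ᶠ x, Δ (fun y => c (y + x)) = 0 := by
  classical
  have := Fintype.ofFinite G
  have := Fintype.ofFinite A
  have hshift : ∀ x : G, Bijective fun (c : G → A) y => c (y + x) := fun x =>
    ⟨fun c c' h => funext fun y => by simpa using congrFun h (y - x),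
      fun c => ⟨fun y => c (y - x), funext fun y => by simp⟩⟩
  simp only [finsum_eq_sum_of_fintype]
  constructor
  · intro h c₀
    let μ : (G → A) → ℝ := fun c => ∑ x, if (fun y => c (y + x)) = c₀ then 1 else 0
    have hμ : ∀ c z, μ (fun y => c (y + z)) = μ c := fun c z => by
      simp only [μ, add_assoc]
      exact Equiv.sum_comp (Equiv.addRight z) fun x => if (fun y => c (y + x)) = c₀ then (1 : ℝ) else 0
    have hfiber : ∀ x c, (fun y => c (y + x)) = c₀ ↔ c = fun y => c₀ (y + -x) := fun x c =>
      ⟨fun h => h ▸ funext fun y => by simp, fun h => h ▸ funext fun y => by simp⟩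
    rw [← h μ hμ]
    simp only [μ, Finset.sum_mul, ite_mul, one_mul, zero_mul, hfiber]
    rw [Finset.sum_comm]
    simp only [Finset.sum_ite_eq', Finset.mem_univ, if_true]
    exact (Equiv.sum_comp (Equiv.neg G) fun x => Δ fun y => c₀ (y + x)).symm
  · intro h μ hμ
    have htr : ∀ x, ∑ c, μ c * Δ c = ∑ c, μ c * Δ (fun y => c (y + x)) := fun x => by
      rw [← (hshift x).sum_comp]
      simp only [hμ]
    have hcard : (Fintype.card G : ℝ) * ∑ c, μ c * Δ c = 0 := by
      calc (Fintype.card G : ℝ) * ∑ c, μ c * Δ c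
          = ∑ x : G, ∑ c, μ c * Δ (fun y => c (y + x)) := by simp [← htr]
        _ = ∑ c, μ c * ∑ x, Δ (fun y => c (y + x)) := by
          rw [Finset.sum_comm]; simp only [Finset.mul_sum]
        _ = 0 := by simp [h]
    exact (mul_eq_zero.1 hcard).resolve_left (by positivity)

end CellularAutomaton

open CellularAutomaton in
theorem stmt10_general {X A : Type*} [AddCommGroup X] [Fintype A]
    (B : Finset X) (hB0 : (0 : X) ∈ B) (hBsym : ∀ b : X, b ∈ B ↔ -b ∈ B)
    (f : (B → A) → A) (φ : A → ℝ)
    (K : AddSubgroup X) [Finite (X ⧸ K)]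
    (hinj : Set.InjOn (QuotientAddGroup.mk' K) ((B : Set X) + (B : Set X)))
    (hvac : ∃ a : A, φ a = 0)
    (hfvac : ∀ w : B → A, (∀ b, φ (w b) = 0) → φ (f w) = 0) :
    conserved B f φ ↔
      ∀ μ : ((X ⧸ K) → A) → ℝ,
        (∀ (c : (X ⧸ K) → A) (x : X ⧸ K), μ (fun y => c (y + x)) = μ c) →
        (∑ᶠ c : (X ⧸ K) → A,
          μ c * (φ (f fun b => c ((0 : X ⧸ K) + QuotientAddGroup.mk' K b.1)) -
                  φ (c (0 : X ⧸ K)))) = 0 := by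
  rw [conserved_iff_forall_totalChange_eq_zero hB0 hvac hfvac,
    forall_totalChange_id_eq_zero_iff hB0 hBsym hinj (QuotientAddGroup.mk'_surjective K) hvac
      hfvac, forall_shiftInvariant_finsum_mul_eq_zero_iff]
  exact forall_congr' fun c => by rw [totalChange_eq_finsum_shift]

theorem stmt10 {X A : Type*} [AddCommGroup X] [Fintype A] [Nonempty A]
    (B : Finset X) (hB0 : (0 : X) ∈ B) (hBsym : ∀ b : X, b ∈ B ↔ -b ∈ B)
    (f : (B → A) → A) (φ : A → ℝ)
    (K : AddSubgroup X) [Finite (X ⧸ K)]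
    (hinj : Set.InjOn (QuotientAddGroup.mk' K) ((B : Set X) + (B : Set X)))
    (hvac : ∃ a : A, φ a = 0)
    (hfvac : ∀ w : B → A, (∀ b, φ (w b) = 0) → φ (f w) = 0) :
    conserved B f φ ↔
      ∀ μ : ((X ⧸ K) → A) → ℝ,
        (∀ (c : (X ⧸ K) → A) (x : X ⧸ K), μ (fun y => c (y + x)) = μ c) →
        (∑ᶠ c : (X ⧸ K) → A,
          μ c * (φ (f fun b => c ((0 : X ⧸ K) + QuotientAddGroup.mk' K b.1)) -
                  φ (c (0 : X ⧸ K)))) = 0 :=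
  stmt10_general B hB0 hBsym f φ K hinj hvac hfvac
end

section
/- Let G be a finite abelian group, A a finite nonempty set, B̃ ⊆ G, f : (B̃ → A) → A, and let F̃ : (G → A) → (G → A) be defined by F̃(a)(x) = f(b ↦ a(x + b)). Let φ : A → ℝ. Call μ : (G → A) → ℝ shift-invariant if μ(a ∘ (· + x)) = μ(a) for all a : G → A and x ∈ G. Then the following are equivalent: (i) ∑_{x ∈ G} φ(F̃(a)(x)) = ∑_{x ∈ G} φ(a(x)) for every a : G → A; (ii) ∑_{a : G → A} μ(a) · (φ(F̃(a)(0)) − φ(a(0))) = 0 for every shift-invariant μ : (G → A) → ℝ. -/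
theorem stmt11 {G A : Type*} [AddCommGroup G] [Fintype G] [DecidableEq G]
    [Fintype A] [Nonempty A]
    (Bt : Set G) (f : (Bt → A) → A) (φ : A → ℝ) :
    (∀ a : G → A,
        (∑ x : G, φ (f fun b => a (x + b.1))) = ∑ x : G, φ (a x)) ↔
      (∀ μ : (G → A) → ℝ,
        (∀ (a : G → A) (x : G), μ (fun y => a (y + x)) = μ a) →
        (∑ a : G → A,
          μ a * (φ (f fun b => a ((0 : G) + b.1)) - φ (a (0 : G)))) = 0) := by
  classical
  set g : (G → A) → G → ℝ := fun a x => φ (f fun b => a (x + b.1)) - φ (a x) with hgdef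
  have hg0 : ∀ (a : G → A) (x : G),
      g (fun y => a (y + x)) 0 = g a x := by
    intro a x
    simp only [hgdef, zero_add]
    have h1 : (fun b : Bt => a (b.1 + x)) = fun b : Bt => a (x + b.1) := by
      funext b; rw [add_comm]
    rw [h1]
  constructor
  · intro h μ hμ
    have key : ∀ x : G, (∑ a : G → A, μ a * g a x) = ∑ a : G → A, μ a * g a 0 := by
      intro x
      refine Fintype.sum_equiv
        ⟨fun a y => a (y + x), fun a y => a (y - x),
          fun a => funext fun y => by simp,
          fun a => funext fun y => by simp⟩
        _ _ ?_
      intro a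
      simp only [Equiv.coe_fn_mk]
      rw [hμ a x, hg0 a x]
    have hcard : (Fintype.card G : ℝ) * (∑ a : G → A, μ a * g a 0) = 0 := by
      have h1 : (∑ _x : G, ∑ a : G → A, μ a * g a 0)
          = (Fintype.card G : ℝ) * (∑ a : G → A, μ a * g a 0) := by
        rw [Finset.sum_const, Finset.card_univ, nsmul_eq_mul]
      rw [← h1]
      have h2 : (∑ x : G, ∑ a : G → A, μ a * g a x)
          = ∑ a : G → A, μ a * ∑ x : G, g a x := by
        rw [Finset.sum_comm]
        simp [Finset.mul_sum]
      calc (∑ _x : G, ∑ a : G → A, μ a * g a 0)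
          = ∑ x : G, ∑ a : G → A, μ a * g a x := by
            refine Finset.sum_congr rfl fun x _ => (key x).symm
        _ = ∑ a : G → A, μ a * ∑ x : G, g a x := h2
        _ = 0 := by
            refine Finset.sum_eq_zero fun a _ => ?_
            have : (∑ x : G, g a x) = 0 := by
              simp only [hgdef, Finset.sum_sub_distrib]
              rw [h a, sub_self]
            rw [this, mul_zero]
    have hne : (Fintype.card G : ℝ) ≠ 0 := by
      exact_mod_cast Fintype.card_ne_zero
    exact (mul_eq_zero.mp hcard).resolve_left hne
  · intro h a
    set s : G → (G → A) := fun x => fun y => a (y + x) with hsdef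
    set μ : (G → A) → ℝ := fun c => ∑ x : G, if c = s x then 1 else 0 with hμdef
    have hTinj : ∀ x : G, Function.Injective
        (fun (c : G → A) => (fun y => c (y + x))) := by
      intro x c₁ c₂ hc
      funext y
      have := congrFun hc (y - x)
      simpa using this
    have hshift : ∀ (c : G → A) (x : G), μ (fun y => c (y + x)) = μ c := by
      intro c x
      simp only [hμdef]
      refine Fintype.sum_equiv (Equiv.subRight x) _ _ ?_
      intro z
      simp only [Equiv.subRight_apply]
      have hkey : (fun y => (s (z - x)) (y + x)) = s z := by
        funext y
        simp only [hsdef]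
        congr 1; abel
      have hcond : ((fun y => c (y + x)) = s z) ↔ (c = s (z - x)) := by
        constructor
        · intro hc
          apply hTinj x
          show (fun y => c (y + x)) = (fun y => s (z - x) (y + x))
          rw [hkey]
          exact hc
        · intro hc
          rw [hc]
          exact hkey
      simp [hcond]
    have := h μ hshift
    have hsum : (∑ c : G → A, μ c * g c 0) = ∑ x : G, g (s x) 0 := by
      simp only [hμdef, Finset.sum_mul, ite_mul, one_mul, zero_mul]
      rw [Finset.sum_comm]
      refine Finset.sum_congr rfl fun x _ => ?_
      simp
    have hfinal : (∑ x : G, g (s x) 0) = 0 := by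
      rw [hsum] at this
      exact this
    have : (∑ x : G, g a x) = 0 := by
      rw [← hfinal]
      exact Finset.sum_congr rfl fun x _ => (hg0 a x).symm
    have h2 : (∑ x : G, φ (f fun b => a (x + b.1))) - (∑ x : G, φ (a x)) = 0 := by
      rw [← Finset.sum_sub_distrib]
      exact this
    linarith [h2]
end

section
/- Assume φ : A → ℝ is conserved by F, and assume there exists a subgroup K of X of finite index such that the quotient map X → X/K is injective on B + B. Then ∑_{w : B → A} φ(f(w)) = |A|^{|B| − 1} · ∑_{a ∈ A} φ(a). -/
open scoped Pointwise

/-!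
Fix a vacuum state `v` and give `A` the signed weight `1 - |A| [a = v]`, of total mass zero;
the counting measure on windows `B → A` is then the product over `B` of `weight + |A| δ_v`.
Expanding this product writes `∑ w, Ψ w`, where `Ψ w = φ (w 0) - φ (f w)`, as
`∑_{D ⊆ B} |A|^(|B| - |D|) N D`, with `N D` the integral of `Ψ` against `weight` on the
cells of `D` and `δ_v` off `D`.

Conservation, applied to the configurations carrying an arbitrary pattern on a finite set `R`
and `v` elsewhere, averaged against the product weight on `R`, gives `∑_t N (t + R) = 0` over
the translates of `R` inside `B`: a window that misses a cell of `R` integrates the zero-mass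
weight over that cell. Summing these relations over the sets `R ∋ 0` with weights
`|A|^(|B| - |R|) / |R|` recovers the nonempty `D` part of the expansion, since each nonempty
`D` is a translate `d + R` with `0 ∈ R` in exactly `|D|` ways. The term `N ∅ = Ψ (const v)`
vanishes because conservation forces `f` to map the vacuum window to a `φ`-null state. Hence
`∑ w, Ψ w = 0`, while `∑ w, φ (w 0) = |A|^(|B| - 1) ∑ a, φ a`.
-/

open Finset Function

namespace LocalRule

section Weight

variable {A : Type*} [Fintype A] [DecidableEq A] (v : A)

def weight (a : A) : ℝ := if a = v then 1 - Fintype.card A else 1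

lemma sum_weight : ∑ a, weight v a = 0 := by
  have h a : weight v a = 1 - Fintype.card A * (if a = v then 1 else 0) := by
    unfold weight; split_ifs <;> ring
  simp [h, sum_sub_distrib]

lemma weight_add_card_mul_ite (a : A) :
    weight v a + Fintype.card A * (if a = v then 1 else 0) = 1 := by
  unfold weight; split_ifs <;> ring

lemma sum_weight_mul_eq_zero {ι : Type*} [Fintype ι] [DecidableEq ι] (i : ι)
    {H : (ι → A) → ℝ} (hH : ∀ p a, H (update p i a) = H p) :
    ∑ p : ι → A, weight v (p i) * H p = 0 := by
  rw [← (Equiv.funSplitAt i A).symm.sum_comp, Fintype.sum_prod_type, sum_comm]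
  refine sum_eq_zero fun q _ => ?_
  set e := (Equiv.funSplitAt i A).symm
  have he a : e (a, q) = update (e (v, q)) i a := by
    ext j; by_cases h : j = i <;> simp [e, Equiv.funSplitAt, Equiv.piSplitAt, h]
  calc ∑ a, weight v (e (a, q) i) * H (e (a, q)) = ∑ a, weight v a * H (e (v, q)) :=
        sum_congr rfl fun a _ => by rw [he a, hH, update_self]
    _ = 0 := by rw [← sum_mul, sum_weight, zero_mul]

end Weight

section Cylinder

variable {X A : Type*} [DecidableEq X] [Fintype A] [DecidableEq A] (B : Finset X) (v : A)

def patch (R : Finset X) (p : R → A) : X → A := fun x => if h : x ∈ R then p ⟨x, h⟩ else v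

def cylinderWeight (D : Finset X) (w : B → A) : ℝ :=
  ∏ b : B, if (b : X) ∈ D then weight v (w b) else if w b = v then 1 else 0

def cylinderSum (D : Finset X) (G : (B → A) → ℝ) : ℝ := ∑ w, cylinderWeight B v D w * G w

lemma cylinderWeight_eq_prod {D : Finset X} (hD : D ⊆ B) (w : B → A) :
    cylinderWeight B v D w = (∏ x ∈ D, weight v (patch v B w x)) *
      ∏ x ∈ B \ D, if patch v B w x = v then 1 else 0 := by
  calc cylinderWeight B v D w = ∏ x ∈ B, if x ∈ D then weight v (patch v B w x)
        else if patch v B w x = v then 1 else 0 := by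
        rw [cylinderWeight, ← prod_coe_sort B]
        exact prod_congr rfl fun b _ => by simp [patch]
    _ = _ := by rw [prod_ite, filter_mem_eq_inter, inter_eq_right.2 hD, filter_notMem_eq_sdiff]

lemma sum_pow_mul_cylinderWeight (w : B → A) :
    ∑ D ∈ B.powerset, (Fintype.card A : ℝ) ^ (#B - #D) * cylinderWeight B v D w = 1 := by
  have h := prod_eq_one (s := B) fun x _ => weight_add_card_mul_ite v (patch v B w x)
  rw [prod_add] at h
  rw [← h]
  refine sum_congr rfl fun D hD => ?_
  rw [mem_powerset] at hD
  rw [prod_mul_distrib, prod_const, card_sdiff_of_subset hD, cylinderWeight_eq_prod B v hD]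
  ring

lemma sum_eq_sum_powerset_cylinderSum (G : (B → A) → ℝ) :
    ∑ w, G w =
      ∑ D ∈ B.powerset, (Fintype.card A : ℝ) ^ (#B - #D) * cylinderSum B v D G := by
  simp_rw [cylinderSum, mul_sum, ← mul_assoc]
  rw [sum_comm]
  simp_rw [← sum_mul, sum_pow_mul_cylinderWeight, one_mul]

lemma cylinderSum_empty (G : (B → A) → ℝ) : cylinderSum B v ∅ G = G fun _ => v := by
  rw [cylinderSum, Fintype.sum_eq_single fun _ => v]
  · simp [cylinderWeight]
  · intro w hw
    obtain ⟨b, hb⟩ : ∃ b, w b ≠ v := by simpa [funext_iff] using hw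
    rw [cylinderWeight, prod_eq_zero (mem_univ b) (by simp [hb]), zero_mul]

end Cylinder

def window {X A : Type*} [Add X] (B : Finset X) (c : X → A) (x : X) : B → A :=
  fun b => c (x + b)

section Window

variable {X A : Type*} [AddCommGroup X] [DecidableEq X] [Fintype A] [DecidableEq A]
  (B : Finset X) (v : A)

lemma cylinderWeight_window_patch {R : Finset X} {x : X} (hR : -x +ᵥ R ⊆ B) (p : R → A) :
    cylinderWeight B v (-x +ᵥ R) (window B (patch v R p) x) = ∏ r, weight v (p r) := by
  calc cylinderWeight B v (-x +ᵥ R) (window B (patch v R p) x)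
      = ∏ y ∈ B, if y ∈ -x +ᵥ R then weight v (patch v R p (x + y)) else 1 := by
        rw [cylinderWeight, ← prod_coe_sort B]
        refine prod_congr rfl fun b _ => ?_
        by_cases hb : (b : X) ∈ -x +ᵥ R
        · simp [hb, window]
        · have hxb : x + (b : X) ∉ R := mem_neg_vadd_finset_iff.not.1 hb
          simp [hb, hxb, window, patch]
    _ = ∏ y ∈ -x +ᵥ R, weight v (patch v R p (x + y)) := by
        rw [prod_ite_mem, inter_eq_right.2 hR]
    _ = ∏ r ∈ R, weight v (patch v R p r) := by
        rw [vadd_finset_def, prod_image (AddAction.injective (-x)).injOn]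
        simp
    _ = ∏ r, weight v (p r) := by
        rw [← prod_coe_sort R]
        simp [patch]

lemma sum_prod_weight_mul_window_patch_of_subset {R : Finset X} {x : X} (hR : -x +ᵥ R ⊆ B)
    (G : (B → A) → ℝ) :
    ∑ p : R → A, (∏ r, weight v (p r)) * G (window B (patch v R p) x) =
      cylinderSum B v (-x +ᵥ R) G := by
  have hmem (r : R) : -x + r ∈ B := hR (vadd_mem_vadd_finset r.2)
  refine sum_of_injOn (fun p => window B (patch v R p) x) ?_ (by simp) ?_
    fun p _ => by rw [cylinderWeight_window_patch B v hR]
  · intro p _ q _ hpq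
    funext r
    simpa [window, patch] using congrFun hpq ⟨-x + r, hmem r⟩
  · intro w _ hw
    suffices hw0 : cylinderWeight B v (-x +ᵥ R) w = 0 by rw [hw0, zero_mul]
    by_contra hne
    apply hw
    have hvac (b : B) (hb : (b : X) ∉ -x +ᵥ R) : w b = v := by
      by_contra hbv
      exact hne (prod_eq_zero (mem_univ b) (by simp [hb, hbv]))
    refine ⟨fun r => w ⟨-x + r, hmem r⟩, mem_coe.2 (mem_univ _), funext fun b => ?_⟩
    by_cases hb : x + (b : X) ∈ R
    · simp [window, patch, hb]
    · simp [window, patch, hb, hvac b (mem_neg_vadd_finset_iff.not.2 hb)]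

lemma sum_prod_weight_mul_window_patch_of_not_subset {R : Finset X} {x : X}
    (hR : ¬ -x +ᵥ R ⊆ B) (G : (B → A) → ℝ) :
    ∑ p : R → A, (∏ r, weight v (p r)) * G (window B (patch v R p) x) = 0 := by
  obtain ⟨r, hrB⟩ : ∃ r : R, -x + ↑r ∉ B := by
    simpa [not_subset, mem_vadd_finset] using hR
  simp_rw [← mul_prod_erase univ _ (mem_univ r), mul_assoc]
  refine sum_weight_mul_eq_zero v r fun p a => ?_
  congr 1
  · exact prod_congr rfl fun s hs => by rw [update_of_ne (ne_of_mem_erase hs)]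
  · congr 1
    funext b
    simp only [window, patch]
    split_ifs with h
    · rw [update_of_ne]
      rintro ⟨⟩
      exact hrB (by simp)
    · rfl

end Window

lemma sum_powerset_eq_zero_of_finsum_translate {X K : Type*} [AddCommGroup X] [DecidableEq X]
    [Field K] [CharZero K]
    (B : Finset X) (c : ℕ → K) {N : Finset X → K} (h0 : N ∅ = 0)
    (hN : ∀ R : Finset X, ∑ᶠ t : X, (if t +ᵥ R ⊆ B then N (t +ᵥ R) else 0) = 0) :
    ∑ D ∈ B.powerset, c #D * N D = 0 := by
  set g : Finset X → K := fun D => c #D / #D * N D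
  set pointed := (B - B).powerset.filter fun R => (0 : X) ∈ R
  have hpointed R (hR : R ∈ pointed) : ∑ t ∈ B with t +ᵥ R ⊆ B, N (t +ᵥ R) = 0 := by
    have hsupp : (support fun t : X => if t +ᵥ R ⊆ B then N (t +ᵥ R) else 0) ⊆ B := by
      intro t ht
      rw [mem_support, ne_eq, ite_eq_right_iff, not_forall] at ht
      obtain ⟨hsub, -⟩ := ht
      simp only [pointed, mem_filter] at hR
      simpa using hsub (vadd_mem_vadd_finset hR.2)
    rw [← hN R, finsum_eq_sum_of_support_subset _ hsupp, sum_filter]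
  calc ∑ D ∈ B.powerset, c #D * N D = ∑ D ∈ B.powerset, ∑ d ∈ D, g D := by
        refine sum_congr rfl fun D _ => ?_
        rcases D.eq_empty_or_nonempty with rfl | hD
        · simp [h0]
        · rw [sum_const, nsmul_eq_mul]
          have := hD.card_pos.ne'
          simp only [g]
          field_simp
    _ = ∑ d ∈ B, ∑ D ∈ B.powerset with d ∈ D, g D := by
        refine sum_comm' fun D d => ?_
        simp only [mem_powerset, mem_filter]
        exact ⟨fun h => ⟨⟨h.1, h.2⟩, h.1 h.2⟩, fun h => ⟨h.1.1, h.1.2⟩⟩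
    _ = ∑ d ∈ B, ∑ R ∈ pointed with d +ᵥ R ⊆ B, g (d +ᵥ R) := by
        refine sum_congr rfl fun d hd => sum_nbij' (fun D => -d +ᵥ D) (fun R => d +ᵥ R)
          ?_ ?_ ?_ ?_ ?_
        · intro D hD
          simp only [mem_powerset, pointed, mem_filter] at hD ⊢
          refine ⟨⟨fun y hy => ?_, ?_⟩, by rw [vadd_neg_vadd]; exact hD.1⟩
          · obtain ⟨e, he, rfl⟩ := mem_vadd_finset.1 hy
            rw [vadd_eq_add, neg_add_eq_sub]
            exact sub_mem_sub (hD.1 he) hd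
          · simpa using vadd_mem_vadd_finset (a := -d) hD.2
        · intro R hR
          simp only [mem_powerset, pointed, mem_filter] at hR ⊢
          exact ⟨hR.2, by simpa using vadd_mem_vadd_finset (a := d) hR.1.2⟩
        · intro D _; simp
        · intro R _; simp
        · intro D _; simp
    _ = ∑ R ∈ pointed, ∑ d ∈ B with d +ᵥ R ⊆ B, g (d +ᵥ R) := by
        refine sum_comm' fun d R => ?_
        simp only [mem_filter]
        tauto
    _ = 0 := sum_eq_zero fun R hR => by
        simp only [g, card_vadd_finset]
        rw [← mul_sum, hpointed R hR, mul_zero]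

lemma sum_comp_eval {ι A M : Type*} [Fintype ι] [DecidableEq ι] [Fintype A] [AddCommMonoid M]
    (i : ι) (g : A → M) :
    ∑ w : ι → A, g (w i) = Fintype.card A ^ (Fintype.card ι - 1) • ∑ a, g a := by
  rw [← (Equiv.funSplitAt i A).symm.sum_comp, Fintype.sum_prod_type]
  simp [Equiv.funSplitAt, Equiv.piSplitAt, smul_sum, Fintype.card_subtype_compl]

section Defect

variable {X A : Type*} [AddCommGroup X] {B : Finset X} {f : (B → A) → A} {φ : A → ℝ}

def defect (hB0 : (0 : X) ∈ B) (f : (B → A) → A) (φ : A → ℝ) (w : B → A) : ℝ :=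
  φ (w ⟨0, hB0⟩) - φ (f w)

lemma defect_window (hB0 : (0 : X) ∈ B) (a : X → A) (x : X) :
    defect hB0 f φ (window B a x) = φ (a x) - φ (induce B f a x) := by
  simp only [defect, window, add_zero]
  rfl

end Defect

end LocalRule

open LocalRule

namespace conserved

variable {X A : Type*} [AddCommGroup X] {B : Finset X} {f : (B → A) → A} {φ : A → ℝ}

lemma apply_const_eq_zero (hcons : conserved B f φ) {v : A} (hv : φ v = 0) :
    φ (f fun _ => v) = 0 := by
  by_contra hu
  have hsupp : (support fun _ : X => φ v).Finite := by simp [hv]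
  have hFv : (support fun _ : X => φ (f fun _ => v)).Finite := hcons.2.1 _ hsupp
  rw [support_const hu] at hFv
  have : Finite X := Set.finite_univ_iff.1 hFv
  have := Fintype.ofFinite X
  have h := hcons.2.2 _ hsupp
  simp [induce, finsum_eq_sum_of_fintype, hv, hu] at h

lemma finsum_defect_window (hcons : conserved B f φ) (hB0 : (0 : X) ∈ B)
    {a : X → A} (ha : (support fun x => φ (a x)).Finite) :
    (support fun x => defect hB0 f φ (window B a x)).Finite ∧
      ∑ᶠ x, defect hB0 f φ (window B a x) = 0 := by
  have hFa := hcons.2.1 a ha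
  simp only [defect_window]
  exact ⟨(ha.union hFa).subset (support_sub _ _),
    by rw [finsum_sub_distrib ha hFa, hcons.2.2 a ha, sub_self]⟩

lemma finsum_cylinderSum_defect [DecidableEq X] [Fintype A] [DecidableEq A]
    (hcons : conserved B f φ) (hB0 : (0 : X) ∈ B)
    {v : A} (hv : φ v = 0) (R : Finset X) :
    ∑ᶠ t : X, (if t +ᵥ R ⊆ B then cylinderSum B v (t +ᵥ R) (defect hB0 f φ) else 0) =
      0 := by
  have hpatch (p : R → A) : (support fun x => φ (patch v R p x)).Finite :=
    R.finite_toSet.subset fun x hx => by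
      by_contra hxR
      exact hx (by simp [patch, mem_coe.not.1 hxR, hv])
  have hwin (p : R → A) := hcons.finsum_defect_window hB0 (hpatch p)
  rw [← finsum_comp_equiv (Equiv.neg X)]
  calc ∑ᶠ x : X, (if -x +ᵥ R ⊆ B then cylinderSum B v (-x +ᵥ R) (defect hB0 f φ) else 0)
      = ∑ᶠ x, ∑ p : R → A,
          (∏ r, weight v (p r)) * defect hB0 f φ (window B (patch v R p) x) :=
        finsum_congr fun x => by
          split_ifs with h
          · exact (sum_prod_weight_mul_window_patch_of_subset B v h _).symm
          · exact (sum_prod_weight_mul_window_patch_of_not_subset B v h _).symm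
    _ = ∑ p : R → A,
          (∏ r, weight v (p r)) * ∑ᶠ x, defect hB0 f φ (window B (patch v R p) x) := by
        rw [finsum_sum_comm _ _ fun p _ => (hwin p).1.subset (support_mul_subset_right _ _)]
        simp_rw [mul_finsum]
    _ = 0 := sum_eq_zero fun p _ => by rw [(hwin p).2, mul_zero]

end conserved

theorem stmt12_general {X A : Type*} [AddCommGroup X] [DecidableEq X] [Fintype A]
    (B : Finset X) (hB0 : (0 : X) ∈ B)
    (f : (B → A) → A) (φ : A → ℝ)
    (hcons : conserved B f φ) :
    (∑ w : B → A, φ (f w)) = (Fintype.card A : ℝ) ^ (B.card - 1) * ∑ a : A, φ a := by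
  classical
  obtain ⟨v, hv⟩ := hcons.1
  have hdefect : ∑ w, defect hB0 f φ w = 0 := by
    rw [sum_eq_sum_powerset_cylinderSum B v]
    refine sum_powerset_eq_zero_of_finsum_translate B (fun n => (Fintype.card A : ℝ) ^ (#B - n))
      (N := fun D => cylinderSum B v D (defect hB0 f φ)) ?_
      (hcons.finsum_cylinderSum_defect hB0 hv)
    rw [cylinderSum_empty, defect, hv, hcons.apply_const_eq_zero hv, sub_zero]
  have hpoint := sum_comp_eval (⟨0, hB0⟩ : B) φ
  rw [Fintype.card_coe, nsmul_eq_mul, Nat.cast_pow] at hpoint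
  simp only [defect, sum_sub_distrib] at hdefect
  linarith

theorem stmt12 {X A : Type*} [AddCommGroup X] [DecidableEq X] [Fintype A] [Nonempty A]
    (B : Finset X) (hB0 : (0 : X) ∈ B) (hBsym : ∀ b : X, b ∈ B ↔ -b ∈ B)
    (f : (B → A) → A) (φ : A → ℝ)
    (hcons : conserved B f φ)
    (hquot : ∃ K : AddSubgroup X, AddSubgroup.FiniteIndex K ∧
      Set.InjOn (QuotientAddGroup.mk' K) ((B : Set X) + (B : Set X))) :
    (∑ w : B → A, φ (f w)) = (Fintype.card A : ℝ) ^ (B.card - 1) * ∑ a : A, φ a :=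
  stmt12_general B hB0 f φ hcons
end

section
/- Let A = {0, 1, …, N − 1} (the integers from 0 to N − 1, N ≥ 1) and φ : A → ℝ the inclusion φ(a) = a. Assume φ is conserved by F, and assume there exists a subgroup K of X of finite index such that the quotient map X → X/K is injective on B + B. Then 2 · ∑_{w : B → A} f(w) = N^{|B|} · (N − 1). -/
open scoped Pointwise

/-!
Average the conservation law over all configurations that are supported in a finite set `S` and
take independent uniform states on `S`. A cell `x` with `x + B ⊆ S` then contributes the mean of
`ψ ∘ f` over all words, each cell of `S` contributes the mean of `ψ`, and the other cells of
`S - B` form a boundary whose contribution is bounded by its size. For the boxes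
`{∑ k_b • b : |k_b| ≤ m}` the sizes grow polynomially in `m`, so for suitable `m` the boundary
is negligible compared with `S`, and the two means agree: `𝔼 w, f w = (N - 1) / 2`.
-/

section

open scoped BigOperators
open Finset Function

theorem Fin.sum_val_mul_two (N : ℕ) : (∑ c : Fin N, (c : ℕ)) * 2 = N * (N - 1) := by
  rw [Fin.sum_univ_eq_sum_range (fun i => i), sum_range_id_mul_two]

theorem Fintype.expect_comp_of_injective {ι T α M : Type*} [Fintype ι] [DecidableEq ι]
    [Fintype T] [DecidableEq T] [Fintype α] [Nonempty α] [AddCommMonoid M] [Module ℚ≥0 M]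
    {e : ι → T} (he : Injective e) (g : (ι → α) → M) :
    𝔼 a : T → α, g (a ∘ e) = 𝔼 u : ι → α, g u := by
  have hswap : Involutive fun p : (T → α) × (ι → α) => (extend e p.2 p.1, p.1 ∘ e) := by
    rintro ⟨a, u⟩
    refine Prod.ext (funext fun t => ?_) (extend_comp he _ _)
    by_cases ht : ∃ i, e i = t
    · obtain ⟨i, rfl⟩ := ht
      simp [he.extend_apply]
    · simp [extend_apply' _ _ _ ht]
  calc 𝔼 a : T → α, g (a ∘ e)
      = 𝔼 p : (T → α) × (ι → α), g (p.1 ∘ e) := by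
        rw [← univ_product_univ, expect_product' univ univ fun a _ => g (a ∘ e)]
        simp only [Fintype.expect_const]
    _ = 𝔼 p : (T → α) × (ι → α), g p.2 :=
        Fintype.expect_bijective _ hswap.bijective _ _ fun _ => rfl
    _ = 𝔼 u : ι → α, g u := by
        rw [← univ_product_univ, expect_product' univ univ fun _ u => g u, Fintype.expect_const]

theorem Fintype.expect_apply_eq {T α M : Type*} [Fintype T] [DecidableEq T] [Fintype α]
    [Nonempty α] [AddCommMonoid M] [Module ℚ≥0 M] (t : T) (g : α → M) :
    𝔼 a : T → α, g (a t) = 𝔼 c, g c :=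
  (Fintype.expect_comp_of_injective (injective_of_subsingleton fun _ : Unit => t)
    fun u => g (u ())).trans <| Fintype.expect_equiv (Equiv.funUnique Unit α) _ _ fun _ => rfl

theorem exists_le_one_add_mul_of_le_pow {c : ℕ → ℕ} {d : ℕ} (hc : 0 < c 0)
    (hpoly : ∀ m, c m ≤ (2 * m + 1) ^ d) {ε : ℝ} (hε : 0 < ε) :
    ∃ m, (c (m + 2) : ℝ) ≤ (1 + ε) * c m := by
  by_contra! hgrowth
  have hgeom : ∀ k : ℕ, (1 + ε) ^ k ≤ c (2 * k) := by
    intro k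
    induction k with
    | zero => simpa using Nat.succ_le_of_lt hc
    | succ k ih =>
      calc (1 + ε) ^ (k + 1) = (1 + ε) * (1 + ε) ^ k := pow_succ' _ _
        _ ≤ (1 + ε) * c (2 * k) := by gcongr
        _ ≤ c (2 * (k + 1)) := (hgrowth (2 * k)).le
  -- but `(1 + ε) ^ k ≤ c (2 k) ≤ (4 k + 1) ^ d ≤ 5 ^ d k ^ d` is impossible for large `k`
  have hsmall : ∀ᶠ k : ℕ in Filter.atTop, (k : ℝ) ^ d / (1 + ε) ^ k < 1 / 5 ^ d :=
    (tendsto_pow_const_div_const_pow_of_one_lt d (by linarith)).eventually_lt_const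
      (by positivity)
  obtain ⟨k, hk, hk1⟩ := (hsmall.and (Filter.eventually_ge_atTop 1)).exists
  have hk1 : (1 : ℝ) ≤ k := by exact_mod_cast hk1
  have hpow : (1 + ε) ^ k ≤ 5 ^ d * (k : ℝ) ^ d :=
    calc (1 + ε) ^ k ≤ c (2 * k) := hgeom k
      _ ≤ ((2 * (2 * k) + 1 : ℕ) : ℝ) ^ d := by exact_mod_cast hpoly (2 * k)
      _ ≤ (5 * k : ℝ) ^ d := by gcongr; push_cast; linarith
      _ = 5 ^ d * (k : ℝ) ^ d := mul_pow _ _ _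
  rw [div_lt_div_iff₀ (by positivity) (by positivity)] at hk
  linarith

section SpanBox

variable {X : Type*} [AddCommGroup X] [DecidableEq X]

noncomputable def spanBox (B : Finset X) (m : ℕ) : Finset X :=
  (Fintype.piFinset fun _ : B => Icc (-(m : ℤ)) m).image fun k => ∑ b : B, k b • (b : X)

variable {B : Finset X}

theorem card_spanBox_le (B : Finset X) (m : ℕ) : #(spanBox B m) ≤ (2 * m + 1) ^ #B := by
  refine card_image_le.trans_eq ?_
  rw [Fintype.card_piFinset, prod_const, Int.card_Icc, card_univ, Fintype.card_coe]
  congr 1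
  omega

theorem zero_mem_spanBox (B : Finset X) (m : ℕ) : 0 ∈ spanBox B m :=
  mem_image.2 ⟨0, Fintype.mem_piFinset.2 fun _ => by simp, by simp⟩

theorem add_zsmul_mem_spanBox {x : X} {m : ℕ} (hx : x ∈ spanBox B m) {b : X} (hb : b ∈ B)
    {j : ℤ} (hj : |j| ≤ 1) : x + j • b ∈ spanBox B (m + 1) := by
  obtain ⟨k, hk, rfl⟩ := mem_image.1 hx
  refine mem_image.2 ⟨k + Pi.single (M := fun _ : B => ℤ) ⟨b, hb⟩ j,
    Fintype.mem_piFinset.2 fun i => ?_, ?_⟩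
  · have hki := mem_Icc.1 (Fintype.mem_piFinset.1 hk i)
    have hji : |Pi.single (M := fun _ : B => ℤ) ⟨b, hb⟩ j i| ≤ 1 := by
      rcases eq_or_ne i ⟨b, hb⟩ with rfl | hi
      · simpa using hj
      · simp [hi]
    rw [abs_le] at hji
    simp only [Pi.add_apply, mem_Icc]
    push_cast
    constructor <;> linarith
  · simp [add_smul, sum_add_distrib, Pi.single_apply]

theorem spanBox_add_subset (B : Finset X) (m : ℕ) : spanBox B m + B ⊆ spanBox B (m + 1) := by
  intro y hy
  obtain ⟨x, hx, b, hb, rfl⟩ := mem_add.1 hy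
  simpa using add_zsmul_mem_spanBox hx hb (j := 1) (by simp)

theorem spanBox_sub_subset (B : Finset X) (m : ℕ) : spanBox B m - B ⊆ spanBox B (m + 1) := by
  intro y hy
  obtain ⟨x, hx, b, hb, rfl⟩ := mem_sub.1 hy
  simpa [sub_eq_add_neg] using add_zsmul_mem_spanBox hx hb (j := -1) (by simp)

theorem exists_card_spanBox_le (B : Finset X) {ε : ℝ} (hε : 0 < ε) :
    ∃ m, (#(spanBox B (m + 2)) : ℝ) ≤ (1 + ε) * #(spanBox B m) :=
  exists_le_one_add_mul_of_le_pow (card_pos.2 ⟨0, zero_mem_spanBox B 0⟩) (card_spanBox_le B) hε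

end SpanBox

section CellularAutomaton

variable {X A : Type*} [AddCommGroup X] {B : Finset X} {f : (B → A) → A} {ψ : A → ℝ}

theorem conserved.map_const (hcons : conserved B f ψ) {z : A} (hz : ψ z = 0) :
    ψ (f fun _ => z) = 0 := by
  have hzero : (support fun _ : X => ψ z).Finite := by simp [hz]
  by_contra hne
  -- otherwise the image of the vacuum has full support, so `X` is finite and
  -- conservation reads `Fintype.card X • ψ (f z) = 0`
  have : Fintype X := by
    refine @Fintype.ofFinite _ (Set.finite_univ_iff.1 ?_)
    simpa [induce, support_const hne] using hcons.2.1 (fun _ => z) hzero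
  have hsum := hcons.2.2 (fun _ => z) hzero
  simp [finsum_eq_sum_of_fintype, induce, hz, hne] at hsum

variable [DecidableEq X]

theorem conserved.sum_sub_eq (hcons : conserved B f ψ) {z : A} (hz : ψ z = 0)
    (S : Finset X) (a : S → A) :
    ∑ x ∈ S - B, ψ (induce B f (extend Subtype.val a fun _ => z) x) = ∑ s : S, ψ (a s) := by
  set c := extend Subtype.val a fun _ => z
  have hc : ∀ x ∉ S, c x = z := fun x hx =>
    extend_apply' _ _ _ fun ⟨s, hs⟩ => hx (hs ▸ s.2)
  have hsupp : (support fun x => ψ (c x)) ⊆ S := fun x hx => by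
    by_contra hxS
    exact hx (by simp [hc x hxS, hz])
  have hsupp' : (support fun x => ψ (induce B f c x)) ⊆ ↑(S - B) := fun x hx => by
    by_contra hxS
    have hwindow : (fun b : B => c (x + b)) = fun _ => z :=
      funext fun b => hc _ fun h => hxS (mem_sub.2 ⟨_, h, b, b.2, add_sub_cancel_right x b⟩)
    exact hx (by simp only [induce, hwindow]; exact hcons.map_const hz)
  have := hcons.2.2 c ((S : Set X).toFinite.subset hsupp)
  rw [finsum_eq_sum_of_support_subset _ hsupp', finsum_eq_sum_of_support_subset _ hsupp,
    ← sum_coe_sort S] at this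
  simpa only [c, Subtype.val_injective.extend_apply] using this

def interiorBy (B S : Finset X) : Finset X := S.filter fun x => ∀ b ∈ B, x + b ∈ S

variable [Fintype A]

theorem conserved.sum_expect_eq (hcons : conserved B f ψ) {z : A} (hz : ψ z = 0)
    (S : Finset X) :
    ∑ x ∈ S - B, 𝔼 a : S → A, ψ (induce B f (extend Subtype.val a fun _ => z) x) =
      #S * 𝔼 c, ψ c := by
  have : Nonempty A := ⟨z⟩
  rw [← expect_sum_comm]
  simp only [hcons.sum_sub_eq hz S]
  rw [expect_sum_comm]
  simp [Fintype.expect_apply_eq]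

theorem expect_induce_of_add_mem [Nonempty A] {S : Finset X} {x : X} (hx : ∀ b ∈ B, x + b ∈ S)
    (g : X → A) :
    𝔼 a : S → A, ψ (induce B f (extend Subtype.val a g) x) = 𝔼 w, ψ (f w) := by
  let e : B → S := fun b => ⟨x + b, hx b b.2⟩
  have he : Injective e := fun b b' h => Subtype.ext (add_left_cancel (congrArg Subtype.val h))
  have hwindow : ∀ a : S → A, induce B f (extend Subtype.val a g) x = f (a ∘ e) := fun a =>
    congrArg f (funext fun b => Subtype.val_injective.extend_apply a g (e b))
  simp only [hwindow]
  exact Fintype.expect_comp_of_injective he fun w => ψ (f w)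

theorem conserved.abs_card_mul_sub_le (hcons : conserved B f ψ) (hB0 : 0 ∈ B) {L : ℝ}
    (hL : ∀ c, |ψ c| ≤ L) (S : Finset X) :
    |#S * 𝔼 c, ψ c - #(interiorBy B S) * 𝔼 w, ψ (f w)| ≤
      (#(S - B) - #(interiorBy B S)) * L := by
  obtain ⟨z, hz⟩ := hcons.1
  have : Nonempty A := ⟨z⟩
  set E := fun x => 𝔼 a : S → A, ψ (induce B f (extend Subtype.val a fun _ => z) x)
  have hIS : interiorBy B S ⊆ S - B := fun x hx =>
    mem_sub.2 ⟨x, (mem_filter.1 hx).1, 0, hB0, sub_zero x⟩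
  have hinterior : ∑ x ∈ interiorBy B S, E x = #(interiorBy B S) * 𝔼 w, ψ (f w) := by
    rw [← nsmul_eq_mul, ← sum_const]
    exact sum_congr rfl fun x hx => expect_induce_of_add_mem (mem_filter.1 hx).2 _
  have hboundary :
      |∑ x ∈ (S - B) \ interiorBy B S, E x| ≤ (#(S - B) - #(interiorBy B S)) * L := by
    refine (abs_sum_le_sum_abs _ _).trans ?_
    rw [← Nat.cast_sub (card_le_card hIS), ← card_sdiff_of_subset hIS, ← nsmul_eq_mul]
    exact sum_le_card_nsmul _ _ _ fun x _ =>
      (abs_expect_le _ _).trans (expect_le univ_nonempty fun a _ => hL _)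
  rwa [← hcons.sum_expect_eq hz S, ← sum_sdiff hIS, ← hinterior, add_sub_cancel_right]

theorem conserved.card_mul_abs_sub_le (hcons : conserved B f ψ) (hB0 : 0 ∈ B) {L : ℝ}
    (hL : ∀ c, |ψ c| ≤ L) {P S Q : Finset X} (hPS : P + B ⊆ S) (hSQ : S - B ⊆ Q) :
    #P * |𝔼 w, ψ (f w) - 𝔼 c, ψ c| ≤ 2 * L * (#Q - #P) := by
  obtain ⟨z, -⟩ := hcons.1
  have : Nonempty A := ⟨z⟩
  have hP : P ⊆ interiorBy B S := fun x hx => mem_filter.2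
    ⟨by simpa using hPS (add_mem_add hx hB0), fun b hb => hPS (add_mem_add hx hb)⟩
  have hS : S ⊆ S - B := fun x hx => mem_sub.2 ⟨x, hx, 0, hB0, sub_zero x⟩
  have h₁ : (#P : ℝ) ≤ #(interiorBy B S) := by exact_mod_cast card_le_card hP
  have h₂ : (#(interiorBy B S) : ℝ) ≤ #S := by exact_mod_cast card_le_card (filter_subset _ _)
  have h₃ : (#S : ℝ) ≤ #(S - B) := by exact_mod_cast card_le_card hS
  have h₄ : (#(S - B) : ℝ) ≤ #Q := by exact_mod_cast card_le_card hSQ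
  have hμ : |𝔼 w, ψ (f w)| ≤ L :=
    (abs_expect_le _ _).trans (expect_le univ_nonempty fun _ _ => hL _)
  have key := hcons.abs_card_mul_sub_le hB0 hL S
  calc #P * |𝔼 w, ψ (f w) - 𝔼 c, ψ c|
      ≤ #S * |𝔼 w, ψ (f w) - 𝔼 c, ψ c| :=
        mul_le_mul_of_nonneg_right (h₁.trans h₂) (abs_nonneg _)
    _ = |#S * (𝔼 w, ψ (f w) - 𝔼 c, ψ c)| := by rw [abs_mul, Nat.abs_cast]
    _ = |(#S - #(interiorBy B S)) * 𝔼 w, ψ (f w) -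
          (#S * 𝔼 c, ψ c - #(interiorBy B S) * 𝔼 w, ψ (f w))| := by ring_nf
    _ ≤ (#S - #(interiorBy B S)) * L + (#(S - B) - #(interiorBy B S)) * L := by
        refine (abs_sub _ _).trans (add_le_add ?_ key)
        rw [abs_mul, abs_of_nonneg (by linarith)]
        gcongr
    _ ≤ 2 * L * (#Q - #P) := by nlinarith [(abs_nonneg _).trans (hL z)]

theorem conserved.expect_eq (hcons : conserved B f ψ) (hB0 : 0 ∈ B) :
    𝔼 w, ψ (f w) = 𝔼 c, ψ c := by
  set L := ∑ c, |ψ c|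
  have hL : ∀ c, |ψ c| ≤ L := fun c =>
    single_le_sum (fun c _ => abs_nonneg (ψ c)) (mem_univ c)
  have hL0 : 0 ≤ L := sum_nonneg fun c _ => abs_nonneg (ψ c)
  rw [← sub_eq_zero, ← abs_nonpos_iff]
  refine le_of_forall_pos_le_add fun δ hδ => ?_
  obtain ⟨m, hm⟩ := exists_card_spanBox_le B (ε := δ / (2 * L + 1)) (by positivity)
  have hpos : (0 : ℝ) < #(spanBox B m) := by
    exact_mod_cast card_pos.2 ⟨0, zero_mem_spanBox B m⟩
  have hbox := hcons.card_mul_abs_sub_le hB0 hL (spanBox_add_subset B m)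
    (spanBox_sub_subset B (m + 1))
  have hgrowth : 2 * L * (#(spanBox B (m + 2)) - #(spanBox B m)) ≤
      #(spanBox B m) * (2 * L * (δ / (2 * L + 1))) := by
    nlinarith
  have hsmall : 2 * L * (δ / (2 * L + 1)) ≤ δ := by
    rw [mul_div_assoc', div_le_iff₀ (by positivity)]
    nlinarith
  have := le_of_mul_le_mul_left (hbox.trans hgrowth) hpos
  linarith

end CellularAutomaton

end

theorem stmt13_general {X : Type*} [AddCommGroup X] [DecidableEq X]
    (N : ℕ) (hN : 1 ≤ N)
    (B : Finset X) (hB0 : (0 : X) ∈ B)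
    (f : (B → Fin N) → Fin N)
    (hcons : conserved B f (fun a : Fin N => ((a : ℕ) : ℝ))) :
    2 * (∑ w : B → Fin N, ((f w : ℕ))) = N ^ B.card * (N - 1) := by
  have hmean := hcons.expect_eq hB0
  rw [Fintype.expect_eq_sum_div_card, Fintype.expect_eq_sum_div_card, Fintype.card_fun,
    Fintype.card_coe, Fintype.card_fin, div_eq_div_iff (by positivity) (by positivity)] at hmean
  have hmean' : (∑ w, (f w : ℕ)) * N = (∑ c : Fin N, (c : ℕ)) * N ^ B.card := by
    exact_mod_cast hmean
  refine Nat.eq_of_mul_eq_mul_left hN ?_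
  calc N * (2 * ∑ w, (f w : ℕ)) = 2 * ((∑ w, (f w : ℕ)) * N) := by ring
    _ = N ^ B.card * ((∑ c : Fin N, (c : ℕ)) * 2) := by rw [hmean']; ring
    _ = N * (N ^ B.card * (N - 1)) := by rw [Fin.sum_val_mul_two]; ring

theorem stmt13 {X : Type*} [AddCommGroup X] [DecidableEq X]
    (N : ℕ) (hN : 1 ≤ N)
    (B : Finset X) (hB0 : (0 : X) ∈ B) (hBsym : ∀ b : X, b ∈ B ↔ -b ∈ B)
    (f : (B → Fin N) → Fin N)
    (hcons : conserved B f (fun a : Fin N => ((a : ℕ) : ℝ)))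
    (hquot : ∃ K : AddSubgroup X, AddSubgroup.FiniteIndex K ∧
      Set.InjOn (QuotientAddGroup.mk' K) ((B : Set X) + (B : Set X))) :
    2 * (∑ w : B → Fin N, ((f w : ℕ))) = N ^ B.card * (N - 1) :=
  stmt13_general N hN B hB0 f hcons
end

section
/- Assume φ : A → ℕ is conserved by F. For a finitely supported configuration a : ℤ → A and z ∈ ℤ, define the rightward flux I⃗_z(a) = ∑_{y ≤ z} φ(a(y)) − ∑_{y ≤ z} φ(F(a)(y)) (both sums are finite because a and F(a) are finitely supported). Then for all finitely supported a, b : ℤ → A and all z ∈ ℤ: if a(y) = b(y) for every y with z − B ≤ y ≤ z + B, then I⃗_z(a) = I⃗_z(b). -/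
/-- The rightward flux from `z` to `z+1`:
`∑_{y ≤ z} φ(a(y)) − ∑_{y ≤ z} φ(F(a)(y))`. -/
noncomputable def flux {A : Type*} (B : ℤ) (f : ((Finset.Icc (-B) B : Finset ℤ) → A) → A)
    (φ : A → ℕ) (a : ℤ → A) (z : ℤ) : ℤ :=
  (∑ᶠ y ∈ Set.Iic z, (φ (a y) : ℤ)) -
    ∑ᶠ y ∈ Set.Iic z, (φ (induce (Finset.Icc (-B) B) f a y) : ℤ)

theorem stmt14 {A : Type*} [Fintype A] [Nonempty A] (B : ℤ) (hB : 1 ≤ B)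
    (f : ((Finset.Icc (-B) B : Finset ℤ) → A) → A) (φ : A → ℕ)
    (hcons : conserved (Finset.Icc (-B) B) f φ)
    (a b : ℤ → A)
    (ha : (Function.support fun x => φ (a x)).Finite)
    (hb : (Function.support fun x => φ (b x)).Finite)
    (z : ℤ) (hab : ∀ y : ℤ, z - B ≤ y → y ≤ z + B → a y = b y) :
    flux B f φ a z = flux B f φ b z := by
  classical
  set F : (ℤ → A) → ℤ → A := induce (Finset.Icc (-B) B) f with hF
  -- the hybrid configuration
  set c : ℤ → A := fun y => if y ≤ z then a y else b y with hc_def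
  have hca : ∀ y : ℤ, y ≤ z + B → c y = a y := by
    intro y hy
    by_cases h : y ≤ z
    · simp [hc_def, h]
    · have h1 : z - B ≤ y := by omega
      simp [hc_def, h, (hab y h1 hy).symm]
  have hcb : ∀ y : ℤ, z - B ≤ y → c y = b y := by
    intro y hy
    by_cases h : y ≤ z
    · have h1 : y ≤ z + B := by omega
      simp [hc_def, h, hab y hy h1]
    · simp [hc_def, h]
  have hc : (Function.support fun x => φ (c x)).Finite := by
    apply (ha.union hb).subset
    intro x hx
    by_cases h : x ≤ z
    · left; simpa [hc_def, h] using hx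
    · right; simpa [hc_def, h] using hx
  have hFca : ∀ y : ℤ, y ≤ z → F c y = F a y := by
    intro y hy
    show f _ = f _
    congr 1
    funext i
    have hi := Finset.mem_Icc.mp i.2
    exact hca _ (by omega)
  have hFcb : ∀ y : ℤ, z < y → F c y = F b y := by
    intro y hy
    show f _ = f _
    congr 1
    funext i
    have hi := Finset.mem_Icc.mp i.2
    exact hcb _ (by omega)
  -- casting supports
  have supcast : ∀ g : ℤ → A, (Function.support fun x => φ (g x)).Finite →
      (Function.support fun x => (φ (g x) : ℤ)).Finite := by
    intro g hg
    apply hg.subset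
    intro x hx
    simpa using hx
  -- conservation in ℤ
  have key : ∀ g : ℤ → A, (Function.support fun x => φ (g x)).Finite →
      ∑ᶠ x, (φ (F g x) : ℤ) = ∑ᶠ x, (φ (g x) : ℤ) := by
    intro g hg
    have h1 := hcons.2.1 g hg
    have h2 := hcons.2.2 g hg
    have e1 : ((∑ᶠ x, φ (g x) : ℕ) : ℤ) = ∑ᶠ x, (φ (g x) : ℤ) :=
      (Nat.castAddMonoidHom ℤ).map_finsum hg
    have e2 : ((∑ᶠ x, φ (F g x) : ℕ) : ℤ) = ∑ᶠ x, (φ (F g x) : ℤ) :=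
      (Nat.castAddMonoidHom ℤ).map_finsum h1
    rw [← e1, ← e2, h2]
  -- splitting a total sum at z
  have split : ∀ g : ℤ → ℤ, (Function.support g).Finite →
      ∑ᶠ x, g x = (∑ᶠ y ∈ Set.Iic z, g y) + ∑ᶠ y ∈ Set.Ioi z, g y := by
    intro g hg
    rw [← finsum_mem_univ g, ← Set.Iic_union_Ioi (a := z),
      finsum_mem_union' (Set.Iic_disjoint_Ioi le_rfl)
        (hg.inter_of_right _) (hg.inter_of_right _)]
  have hFc : (Function.support fun x => φ (F c x)).Finite := hcons.2.1 c hc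
  have hFb : (Function.support fun x => φ (F b x)).Finite := hcons.2.1 b hb
  -- splits of conservation for c
  have eqc : ∑ᶠ x, (φ (F c x) : ℤ) = ∑ᶠ x, (φ (c x) : ℤ) := key c hc
  rw [split _ (supcast _ hFc), split _ (supcast _ hc)] at eqc
  have eqb : ∑ᶠ x, (φ (F b x) : ℤ) = ∑ᶠ x, (φ (b x) : ℤ) := key b hb
  rw [split _ (supcast _ hFb), split _ (supcast _ hb)] at eqb
  -- replace c-sums by a/b-sums
  have r1 : (∑ᶠ y ∈ Set.Iic z, (φ (F c y) : ℤ)) = ∑ᶠ y ∈ Set.Iic z, (φ (F a y) : ℤ) :=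
    finsum_mem_congr rfl (fun y hy => by rw [hFca y hy])
  have r2 : (∑ᶠ y ∈ Set.Ioi z, (φ (F c y) : ℤ)) = ∑ᶠ y ∈ Set.Ioi z, (φ (F b y) : ℤ) :=
    finsum_mem_congr rfl (fun y hy => by rw [hFcb y hy])
  have r3 : (∑ᶠ y ∈ Set.Iic z, (φ (c y) : ℤ)) = ∑ᶠ y ∈ Set.Iic z, (φ (a y) : ℤ) :=
    finsum_mem_congr rfl (fun y hy => by rw [hca y (by have : y ≤ z := hy; omega)])
  have r4 : (∑ᶠ y ∈ Set.Ioi z, (φ (c y) : ℤ)) = ∑ᶠ y ∈ Set.Ioi z, (φ (b y) : ℤ) :=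
    finsum_mem_congr rfl (fun y hy => by
      rw [hcb y (by have : z < y := hy; omega)])
  rw [r1, r2, r3, r4] at eqc
  show (∑ᶠ y ∈ Set.Iic z, (φ (a y) : ℤ)) - (∑ᶠ y ∈ Set.Iic z, (φ (F a y) : ℤ))
      = (∑ᶠ y ∈ Set.Iic z, (φ (b y) : ℤ)) - ∑ᶠ y ∈ Set.Iic z, (φ (F b y) : ℤ)
  linarith
end
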